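/- arXiv:0912.4012 — 8 statements merged into one kernel-verified Lean document; each statement's English description precedes it below -/
import Mathlib

section
/- The Wardrop equilibrium set W* = P⁻¹(y*) ∩ Δ is a nonempty convex polytope with dim(W*) ≤ red(Q), where red(Q) = dim(ker Q); moreover if W* contains a point in the interior of Δ then dim(W*) = red(Q). -/
/-!
With `L x = (blockSum x, P x)`, the Wardrop set is `{x | 0 ≤ x ∧ L x = (ρ, y*)}`: the nonnegative
part of a fiber of a linear map. Such a set is convex and its direction lies in
`ker L = Z ⊓ ker P ≅ ker Q`. At a strictly positive point `q` of the fiber, every `v ∈ ker L`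
can be followed for a short time, `q + ε v` staying nonnegative, so `ker L` is the whole direction.
-/

open Filter Topology

theorem convex_nonneg_fiber {V W : Type*} [AddCommGroup V] [PartialOrder V] [IsOrderedAddMonoid V]
    [Module ℝ V] [PosSMulMono ℝ V] [AddCommGroup W] [Module ℝ W] (f : V →ₗ[ℝ] W) (c : W) :
    Convex ℝ {x | 0 ≤ x ∧ f x = c} :=
  (convex_Ici 0).inter ((convex_singleton c).linear_preimage f)

theorem le_vectorSpan_of_forall_exists_add_smul_mem {k V : Type*} [Field k] [AddCommGroup V]
    [Module k V] {s : Set V} {K : Submodule k V} {q : V} (hq : q ∈ s)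
    (h : ∀ v ∈ K, ∃ ε : k, ε ≠ 0 ∧ q + ε • v ∈ s) : K ≤ vectorSpan k s := by
  intro v hv
  obtain ⟨ε, hε, hεv⟩ := h v hv
  have : ε • v ∈ vectorSpan k s := by simpa using vsub_mem_vectorSpan k hεv hq
  simpa [smul_smul, inv_mul_cancel₀ hε] using Submodule.smul_mem _ ε⁻¹ this

theorem vectorSpan_le_ker_of_forall_eq {k V W : Type*} [Ring k] [AddCommGroup V] [Module k V]
    [AddCommGroup W] [Module k W] (f : V →ₗ[k] W) {s : Set V} {c : W}
    (h : ∀ x ∈ s, f x = c) : vectorSpan k s ≤ LinearMap.ker f := by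
  rw [vectorSpan_def, Submodule.span_le]
  rintro _ ⟨x, hx, y, hy, rfl⟩
  simp [h x hx, h y hy]

section NonnegFiber

variable {ι M : Type*} [Fintype ι] [AddCommGroup M] [Module ℝ M]

theorem exists_pos_add_smul_pos {q : ι → ℝ} (hq : ∀ a, 0 < q a) (v : ι → ℝ) :
    ∃ ε : ℝ, 0 < ε ∧ ∀ a, 0 < q a + ε * v a := by
  have hopen : IsOpen {x : ι → ℝ | ∀ a, 0 < x a} := by
    simp only [Set.ofPred_forall]
    exact isOpen_iInter_of_finite fun a => isOpen_lt continuous_const (continuous_apply a)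
  have hlim : Tendsto (fun t : ℝ => q + t • v) (𝓝[>] 0) (𝓝 q) := by
    have : Continuous (fun t : ℝ => q + t • v) := by fun_prop
    simpa using (this.tendsto 0).mono_left nhdsWithin_le_nhds
  obtain ⟨ε, hε, hεq⟩ :=
    ((hlim.eventually (hopen.mem_nhds hq)).and self_mem_nhdsWithin).exists
  exact ⟨ε, hεq, fun a => by simpa using hε a⟩

theorem vectorSpan_nonneg_fiber_eq_ker (f : (ι → ℝ) →ₗ[ℝ] M) {c : M} {q : ι → ℝ}
    (hq : ∀ a, 0 < q a) (hfq : f q = c) :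
    vectorSpan ℝ {x | 0 ≤ x ∧ f x = c} = LinearMap.ker f := by
  refine le_antisymm (vectorSpan_le_ker_of_forall_eq f fun x hx => hx.2) ?_
  refine le_vectorSpan_of_forall_exists_add_smul_mem ⟨fun a => (hq a).le, hfq⟩ fun v hv => ?_
  obtain ⟨ε, hε, hpos⟩ := exists_pos_add_smul_pos hq v
  refine ⟨ε, hε.ne', fun a => by simpa using (hpos a).le, ?_⟩
  simp [hfq, LinearMap.mem_ker.mp hv]

end NonnegFiber

theorem finrank_ker_domRestrict {k V W : Type*} [Ring k] [AddCommGroup V] [Module k V]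
    [AddCommGroup W] [Module k W] (Z : Submodule k V) (f : V →ₗ[k] W) :
    Module.finrank k (LinearMap.ker (f.domRestrict Z)) = Module.finrank k ↥(Z ⊓ LinearMap.ker f) := by
  rw [LinearMap.ker_domRestrict, ← Submodule.finrank_map_subtype_eq Z,
    Submodule.map_comap_subtype]

section Flows

variable {ι : Type*} {A : ι → Type*} [∀ i, Fintype (A i)]

def blockSum : ((Σ i, A i) → ℝ) →ₗ[ℝ] (ι → ℝ) where
  toFun x i := ∑ α, x ⟨i, α⟩
  map_add' x y := by ext i; simp [Finset.sum_add_distrib]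
  map_smul' c x := by ext i; simp [Finset.mul_sum]

@[simp]
theorem blockSum_apply (x : (Σ i, A i) → ℝ) (i : ι) : blockSum x i = ∑ α, x ⟨i, α⟩ := rfl

end Flows

theorem stmt3_general {ι : Type*} [Fintype ι] {A : ι → Type*} [∀ i, Fintype (A i)]
    {E : Type*}
    (ρ : ι → ℝ)
    (P : ((Σ i, A i) → ℝ) →ₗ[ℝ] (E → ℝ))
    (Δset : Set ((Σ i, A i) → ℝ))
    (hΔ : Δset = {x | (∀ a, 0 ≤ x a) ∧ ∀ i, ∑ α : A i, x ⟨i, α⟩ = ρ i})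
    (Z : Submodule ℝ ((Σ i, A i) → ℝ))
    (hZ : ∀ z, z ∈ Z ↔ ∀ i, ∑ α : A i, z ⟨i, α⟩ = 0)
    (ystar : E → ℝ)
    (hyΔ : ystar ∈ P '' Δset)
    (Wstar : Set ((Σ i, A i) → ℝ))
    (hW : Wstar = {x ∈ Δset | P x = ystar}) :
    Wstar.Nonempty ∧ Convex ℝ Wstar ∧
      Module.finrank ℝ (vectorSpan ℝ Wstar) ≤
        Module.finrank ℝ (LinearMap.ker (P.domRestrict Z)) ∧
      ((∃ q ∈ Wstar, ∀ a, 0 < q a) →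
        Module.finrank ℝ (vectorSpan ℝ Wstar) =
          Module.finrank ℝ (LinearMap.ker (P.domRestrict Z))) := by
  set L := (blockSum : ((Σ i, A i) → ℝ) →ₗ[ℝ] (ι → ℝ)).prod P
  have hWL : Wstar = {x | 0 ≤ x ∧ L x = (ρ, ystar)} := by
    ext x
    simp [hW, hΔ, L, Pi.le_def, funext_iff, and_assoc]
  have hZL : Z ⊓ LinearMap.ker P = LinearMap.ker L := by
    rw [LinearMap.ker_prod]
    congr 1
    ext z
    simp [hZ, funext_iff]
  rw [finrank_ker_domRestrict, hZL]
  refine ⟨?_, ?_, ?_, ?_⟩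
  · obtain ⟨x, hx, hPx⟩ := hyΔ
    exact ⟨x, hW ▸ ⟨hx, hPx⟩⟩
  · exact hWL ▸ convex_nonneg_fiber L _
  · exact Submodule.finrank_mono (vectorSpan_le_ker_of_forall_eq L fun x hx => (hWL ▸ hx).2)
  · rintro ⟨q, hq, hqpos⟩
    rw [hWL, vectorSpan_nonneg_fiber_eq_ker L hqpos (hWL ▸ hq).2]

/-- The Wardrop set `W* = P⁻¹(y*) ∩ Δ` is a nonempty convex polytope
with `dim W* ≤ red(Q) = dim (ker Q)`, and `dim W* = red(Q)` whenever `W*` contains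
a point in the interior of `Δ`. -/
theorem stmt3 {ι : Type*} [Fintype ι] {A : ι → Type*} [∀ i, Fintype (A i)]
    {E : Type*} [Fintype E]
    (ρ : ι → ℝ) (hρ : ∀ i, 0 < ρ i)
    (φ : E → ℝ → ℝ) (hmono : ∀ r, StrictMono (φ r)) (hcont : ∀ r, Continuous (φ r))
    (P : ((Σ i, A i) → ℝ) →ₗ[ℝ] (E → ℝ))
    (Δset : Set ((Σ i, A i) → ℝ))
    (hΔ : Δset = {x | (∀ a, 0 ≤ x a) ∧ ∀ i, ∑ α : A i, x ⟨i, α⟩ = ρ i})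
    (Z : Submodule ℝ ((Σ i, A i) → ℝ))
    (hZ : ∀ z, z ∈ Z ↔ ∀ i, ∑ α : A i, z ⟨i, α⟩ = 0)
    (Φ : (E → ℝ) → ℝ)
    (hΦ : ∀ y, Φ y = ∑ r, ∫ w in (0:ℝ)..(y r), φ r w)
    (ystar : E → ℝ)
    (hyΔ : ystar ∈ P '' Δset)
    (hymin : ∀ y ∈ P '' Δset, y ≠ ystar → Φ ystar < Φ y)
    (Wstar : Set ((Σ i, A i) → ℝ))
    (hW : Wstar = {x ∈ Δset | P x = ystar}) :
    Wstar.Nonempty ∧ Convex ℝ Wstar ∧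
      Module.finrank ℝ (vectorSpan ℝ Wstar) ≤
        Module.finrank ℝ (LinearMap.ker (P.domRestrict Z)) ∧
      ((∃ q ∈ Wstar, ∀ a, 0 < q a) →
        Module.finrank ℝ (vectorSpan ℝ Wstar) =
          Module.finrank ℝ (LinearMap.ker (P.domRestrict Z))) :=
  stmt3_general ρ P Δset hΔ Z hZ ystar hyΔ Wstar hW
end

section
/- If q is a strict Wardrop equilibrium of a congestion model with continuous latency functions, then q is the unique Wardrop equilibrium. (Proof idea: if q' ≠ q were another Wardrop equilibrium, all convex combinations q + θ(q'−q) would be Wardrop equilibria; for small θ > 0 some path μ not used in q would be employed, forcing ω_{iμ}(q+θz) = ω_{i,0}(q+θz), and continuity would yield ω_{i,0}(q) = ω_{iμ}(q), contradicting strictness.) -/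
/-!
Any two Wardrop equilibria `q, q'` satisfy the variational inequalities
`⟨ω(q), q' - q⟩ ≥ 0` and `⟨ω(q'), q - q'⟩ ≥ 0`. Adding them and rewriting the path-cost pairing
as an edge sum gives `∑ᵣ (φᵣ(ℓᵣ(q')) - φᵣ(ℓᵣ(q))) (ℓᵣ(q') - ℓᵣ(q)) ≤ 0`, whose terms are
nonnegative by monotonicity of the `φᵣ`; strict monotonicity then forces equal edge loads, hence
equal path latencies. If `q` is strict, a path carrying flow in `q'` must have minimal latency
at `q'`, hence at `q`, so it is the path used by `q`.
-/

open Finset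

theorem StrictMono.sub_mul_sub_pos {R : Type*} [Ring R] [LinearOrder R] [IsStrictOrderedRing R]
    {f : R → R} (hf : StrictMono f) {x y : R} (hxy : x ≠ y) : 0 < (f x - f y) * (x - y) := by
  rcases hxy.lt_or_gt with h | h
  · exact mul_pos_of_neg_of_neg (sub_neg.2 (hf h)) (sub_neg.2 h)
  · exact mul_pos (sub_pos.2 (hf h)) (sub_pos.2 h)

theorem eq_of_sum_sub_mul_sub_nonpos {E : Type*} [Fintype E] {φ : E → ℝ → ℝ}
    (hφ : ∀ r, StrictMono (φ r)) {L L' : E → ℝ}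
    (h : ∑ r, (φ r (L' r) - φ r (L r)) * (L' r - L r) ≤ 0) : L' = L := by
  have hnonneg : ∀ r ∈ univ, 0 ≤ (φ r (L' r) - φ r (L r)) * (L' r - L r) := fun r _ => by
    by_cases hr : L' r = L r
    · simp [hr]
    · exact ((hφ r).sub_mul_sub_pos hr).le
  have hzero := (sum_eq_zero_iff_of_nonneg hnonneg).1 (le_antisymm h (sum_nonneg hnonneg))
  funext r
  by_contra hr
  exact ((hφ r).sub_mul_sub_pos hr).ne' (hzero r (mem_univ r))

theorem sum_mul_le_sum_mul_of_pos_imp_le {α : Type*} [Fintype α] {c p x : α → ℝ}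
    (hp : ∀ a, 0 ≤ p a) (hx : ∀ a, 0 ≤ x a) (hsum : ∑ a, p a = ∑ a, x a)
    (hmin : ∀ a b, 0 < p a → c a ≤ c b) : ∑ a, c a * p a ≤ ∑ a, c a * x a := by
  by_cases hused : ∃ a, 0 < p a
  · obtain ⟨a₀, ha₀⟩ := hused
    have hp_eq : ∀ a, c a * p a = c a₀ * p a := fun a => by
      rcases (hp a).lt_or_eq with ha | ha
      · rw [le_antisymm (hmin a a₀ ha) (hmin a₀ a ha₀)]
      · simp [← ha]
    calc ∑ a, c a * p a = c a₀ * ∑ a, x a := by simp only [hp_eq, ← mul_sum, hsum]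
      _ ≤ ∑ a, c a * x a := by
        rw [mul_sum]
        exact sum_le_sum fun a _ => mul_le_mul_of_nonneg_right (hmin a₀ a ha₀) (hx a)
  · push Not at hused
    have hp0 : ∀ a, p a = 0 := fun a => le_antisymm (hused a) (hp a)
    have hx0 : ∀ a ∈ univ, x a = 0 :=
      (sum_eq_zero_iff_of_nonneg fun a _ => hx a).1 (by simp [← hsum, hp0])
    simp [hp0, hx0]

theorem sum_sigma_mul_le_sum_sigma_mul_of_pos_imp_le {ι : Type*} {A : ι → Type*} [Fintype ι]
    [∀ i, Fintype (A i)] {c p x : (Σ i, A i) → ℝ} (hp : ∀ a, 0 ≤ p a) (hx : ∀ a, 0 ≤ x a)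
    (hsum : ∀ i, ∑ α, p ⟨i, α⟩ = ∑ α, x ⟨i, α⟩)
    (hmin : ∀ i, ∀ α β : A i, 0 < p ⟨i, α⟩ → c ⟨i, α⟩ ≤ c ⟨i, β⟩) :
    ∑ a, c a * p a ≤ ∑ a, c a * x a := by
  rw [Fintype.sum_sigma, Fintype.sum_sigma]
  exact sum_le_sum fun i _ =>
    sum_mul_le_sum_mul_of_pos_imp_le (fun _ => hp _) (fun _ => hx _) (hsum i) (hmin i)

theorem sum_sum_mem_mul_eq_sum_mul_sum_ite {κ E R : Type*} [Fintype κ] [Fintype E]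
    [DecidableEq E] [NonUnitalNonAssocSemiring R] (inc : κ → Finset E) (f : E → R) (y : κ → R) :
    ∑ a, (∑ r ∈ inc a, f r) * y a = ∑ r, f r * ∑ a, if r ∈ inc a then y a else 0 := by
  simp only [sum_mul, mul_sum, mul_ite, mul_zero]
  rw [sum_comm]
  refine sum_congr rfl fun a _ => ?_
  rw [sum_ite_mem, univ_inter]

theorem sum_latency_sub_mul_sub_eq_sum_edge {κ E : Type*} [Fintype κ] [Fintype E]
    [DecidableEq E] (inc : κ → Finset E) (φ : E → ℝ → ℝ) (load : (κ → ℝ) → E → ℝ)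
    (hload : ∀ x r, load x r = ∑ a, if r ∈ inc a then x a else 0)
    (ω : κ → (κ → ℝ) → ℝ) (hω : ∀ a x, ω a x = ∑ r ∈ inc a, φ r (load x r)) (x y : κ → ℝ) :
    ∑ a, (ω a x - ω a y) * (x a - y a) =
      ∑ r, (φ r (load x r) - φ r (load y r)) * (load x r - load y r) := by
  have hω_sub : ∀ a, ω a x - ω a y = ∑ r ∈ inc a, (φ r (load x r) - φ r (load y r)) :=
    fun a => by rw [hω, hω, sum_sub_distrib]
  have hload_sub : ∀ r, load x r - load y r = ∑ a, if r ∈ inc a then x a - y a else 0 :=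
    fun r => by
      rw [hload, hload, ← sum_sub_distrib]
      exact sum_congr rfl fun a _ => by split_ifs <;> simp
  simp only [hω_sub, hload_sub]
  exact sum_sum_mem_mul_eq_sum_mul_sum_ite inc _ _

theorem eq_ite_of_forall_ne_eq_zero {α M : Type*} [Fintype α] [DecidableEq α] [AddCommMonoid M]
    {x : α → M} {a₀ : α} {s : M} (hsum : ∑ a, x a = s) (hzero : ∀ a, a ≠ a₀ → x a = 0)
    (a : α) : x a = if a = a₀ then s else 0 := by
  split_ifs with ha
  · rw [← hsum, Fintype.sum_eq_single a₀ hzero, ha]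
  · exact hzero a ha

theorem stmt4_general {ι : Type*} [Fintype ι] {A : ι → Type*} [∀ i, Fintype (A i)]
    [∀ i, DecidableEq (A i)]
    {E : Type*} [Fintype E] [DecidableEq E]
    (ρ : ι → ℝ)
    (inc : (Σ i, A i) → Finset E)
    (φ : E → ℝ → ℝ) (hmono : ∀ r, StrictMono (φ r))
    (load : ((Σ i, A i) → ℝ) → E → ℝ)
    (hload : ∀ x r, load x r = ∑ a : Σ i, A i, (if r ∈ inc a then x a else 0))
    (ω : (Σ i, A i) → ((Σ i, A i) → ℝ) → ℝ)
    (hω : ∀ a x, ω a x = ∑ r ∈ inc a, φ r (load x r))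
    (Δset : Set ((Σ i, A i) → ℝ))
    (hΔ : Δset = {x | (∀ a, 0 ≤ x a) ∧ ∀ i, ∑ α : A i, x ⟨i, α⟩ = ρ i})
    (IsWardrop : ((Σ i, A i) → ℝ) → Prop)
    (hWdef : ∀ q, IsWardrop q ↔ q ∈ Δset ∧
      ∀ i, ∀ α β : A i, 0 < q ⟨i, α⟩ → ω ⟨i, α⟩ q ≤ ω ⟨i, β⟩ q)
    (a0 : ∀ i, A i)
    (q : (Σ i, A i) → ℝ)
    (hpure : ∀ i (α : A i), q ⟨i, α⟩ = if α = a0 i then ρ i else 0)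
    (hstrict : ∀ i (β : A i), β ≠ a0 i → ω ⟨i, a0 i⟩ q < ω ⟨i, β⟩ q)
    (hqW : IsWardrop q) :
    ∀ q', IsWardrop q' → q' = q := by
  intro q' hq'W
  obtain ⟨⟨hq_nonneg, hq_sum⟩, hq_min⟩ := hΔ ▸ (hWdef q).1 hqW
  obtain ⟨⟨hq'_nonneg, hq'_sum⟩, hq'_min⟩ := hΔ ▸ (hWdef q').1 hq'W
  have hvi := sum_sigma_mul_le_sum_sigma_mul_of_pos_imp_le (c := (ω · q)) hq_nonneg hq'_nonneg
    (fun i => (hq_sum i).trans (hq'_sum i).symm) hq_min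
  have hvi' := sum_sigma_mul_le_sum_sigma_mul_of_pos_imp_le (c := (ω · q')) hq'_nonneg hq_nonneg
    (fun i => (hq'_sum i).trans (hq_sum i).symm) hq'_min
  have hload_eq : load q' = load q := eq_of_sum_sub_mul_sub_nonpos hmono <| by
    rw [← sum_latency_sub_mul_sub_eq_sum_edge inc φ load hload ω hω]
    simp only [sub_mul, mul_sub, sum_sub_distrib]
    linarith
  have hω_eq : ∀ a, ω a q' = ω a q := fun a => by rw [hω, hω, hload_eq]
  have hunused : ∀ i (β : A i), β ≠ a0 i → q' ⟨i, β⟩ = 0 := fun i β hβ => by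
    by_contra hne
    have hle := hq'_min i β (a0 i) ((hq'_nonneg _).lt_of_ne' hne)
    rw [hω_eq, hω_eq] at hle
    exact (hstrict i β hβ).not_ge hle
  funext ⟨i, α⟩
  rw [hpure]
  exact eq_ite_of_forall_ne_eq_zero (hq'_sum i) (hunused i) α

/-- A strict Wardrop equilibrium of a congestion model with continuous
(strictly increasing) latencies is the unique Wardrop equilibrium. -/
theorem stmt4 {ι : Type*} [Fintype ι] {A : ι → Type*} [∀ i, Fintype (A i)]
    [∀ i, DecidableEq (A i)]
    {E : Type*} [Fintype E] [DecidableEq E]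
    (ρ : ι → ℝ) (hρ : ∀ i, 0 < ρ i)
    (inc : (Σ i, A i) → Finset E)
    (φ : E → ℝ → ℝ) (hmono : ∀ r, StrictMono (φ r)) (hcont : ∀ r, Continuous (φ r))
    (load : ((Σ i, A i) → ℝ) → E → ℝ)
    (hload : ∀ x r, load x r = ∑ a : Σ i, A i, (if r ∈ inc a then x a else 0))
    (ω : (Σ i, A i) → ((Σ i, A i) → ℝ) → ℝ)
    (hω : ∀ a x, ω a x = ∑ r ∈ inc a, φ r (load x r))
    (Δset : Set ((Σ i, A i) → ℝ))
    (hΔ : Δset = {x | (∀ a, 0 ≤ x a) ∧ ∀ i, ∑ α : A i, x ⟨i, α⟩ = ρ i})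
    (IsWardrop : ((Σ i, A i) → ℝ) → Prop)
    (hWdef : ∀ q, IsWardrop q ↔ q ∈ Δset ∧
      ∀ i, ∀ α β : A i, 0 < q ⟨i, α⟩ → ω ⟨i, α⟩ q ≤ ω ⟨i, β⟩ q)
    (a0 : ∀ i, A i)
    (q : (Σ i, A i) → ℝ)
    (hpure : ∀ i (α : A i), q ⟨i, α⟩ = if α = a0 i then ρ i else 0)
    (hstrict : ∀ i (β : A i), β ≠ a0 i → ω ⟨i, a0 i⟩ q < ω ⟨i, β⟩ q)
    (hqW : IsWardrop q) :
    ∀ q', IsWardrop q' → q' = q :=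
  stmt4_general ρ inc φ hmono load hload ω hω Δset hΔ IsWardrop hWdef a0 q hpure hstrict hqW
end

section
/- Along solutions of the rate-adjusted replicator dynamics ẋ_{iα} = λᵢ x_{iα}(ωᵢ(x) − ω_{iα}(x)), the potential F₀(x) = Φ(P(x)) − Φ(y*) is nonincreasing: dF₀/dt = Σᵢ λᵢρᵢ [ωᵢ(x)² − ρᵢ⁻¹ Σ_α x_{iα} ω_{iα}(x)²] ≤ 0, with equality iff ω_{iα}(x) = ωᵢ(x) for all α in the support of x. -/
/-!
The chain rule turns `dF₀/dt` into `Σ_a ẋ_a ω_a(x)`, and on player `i`'s block this is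
`λᵢ (ωᵢ Σ_α x_α ω_α − Σ_α x_α ω_α²) = λᵢρᵢ (ωᵢ² − ρᵢ⁻¹ Σ_α x_α ω_α²)`. Since `x` restricted to
that block has mass `ρᵢ` and mean payoff `ωᵢ`, the bracket is minus a weighted variance:
`ρᵢ (ωᵢ² − ρᵢ⁻¹ Σ_α x_α ω_α²) = −Σ_α x_α (ω_α − ωᵢ)²`. Hence the derivative is `≤ 0`, and it
vanishes exactly when every strategy in the support earns the mean payoff.
-/

open Finset

section PartialDerivatives

variable {𝕜 n : Type*} [NontriviallyNormedField 𝕜] [Fintype n] [DecidableEq n]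
  {F : (n → 𝕜) → 𝕜} {g : n → 𝕜}

theorem fderiv_apply_single_of_hasDerivAt_update {z : n → 𝕜} (hF : DifferentiableAt 𝕜 F z)
    (a : n) (hg : HasDerivAt (fun s => F (Function.update z a s)) (g a) (z a)) :
    fderiv 𝕜 F z (Pi.single a 1) = g a := by
  have hF' : HasFDerivAt F (fderiv 𝕜 F z) (Function.update z a (z a)) := by
    simpa using hF.hasFDerivAt
  exact (hF'.comp_hasDerivAt (z a) (hasDerivAt_update z a (z a))).unique hg

theorem HasDerivAt.comp_of_hasDerivAt_update {γ : 𝕜 → n → 𝕜} {γ' : n → 𝕜} {t : 𝕜}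
    (hF : DifferentiableAt 𝕜 F (γ t))
    (hg : ∀ a, HasDerivAt (fun s => F (Function.update (γ t) a s)) (g a) (γ t a))
    (hγ : HasDerivAt γ γ' t) :
    HasDerivAt (fun s => F (γ s)) (∑ a, γ' a * g a) t := by
  have hsum : fderiv 𝕜 F (γ t) γ' = ∑ a, γ' a * g a := by
    conv_lhs => rw [pi_eq_sum_univ' γ']
    simp only [map_sum, map_smul, smul_eq_mul,
      fderiv_apply_single_of_hasDerivAt_update hF _ (hg _)]
  rw [← hsum]
  exact hF.hasFDerivAt.comp_hasDerivAt t hγ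

end PartialDerivatives

section WeightedVariance

variable {α : Type*} [Fintype α] (p f : α → ℝ) {ρ m : ℝ}

theorem sum_mul_mean_sub_mul_self (hm : ∑ a, p a * f a = ρ * m) (hρ : ρ ≠ 0) :
    ∑ a, p a * (m - f a) * f a = ρ * (m ^ 2 - ρ⁻¹ * ∑ a, p a * f a ^ 2) := by
  have hexpand : ∑ a, p a * (m - f a) * f a = m * ∑ a, p a * f a - ∑ a, p a * f a ^ 2 := by
    rw [mul_sum, ← sum_sub_distrib]
    exact sum_congr rfl fun a _ => by ring
  rw [hexpand, hm, mul_sub, mul_inv_cancel_left₀ hρ]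
  ring

theorem mul_sq_mean_sub_eq_neg_sum_mul_sq_sub (hp : ∑ a, p a = ρ)
    (hm : ∑ a, p a * f a = ρ * m) (hρ : ρ ≠ 0) :
    ρ * (m ^ 2 - ρ⁻¹ * ∑ a, p a * f a ^ 2) = -∑ a, p a * (f a - m) ^ 2 := by
  have hexpand : ∑ a, p a * (f a - m) ^ 2
      = ∑ a, p a * f a ^ 2 - 2 * m * ∑ a, p a * f a + m ^ 2 * ∑ a, p a := by
    rw [mul_sum, mul_sum, ← sum_sub_distrib, ← sum_add_distrib]
    exact sum_congr rfl fun a _ => by ring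
  rw [hexpand, hm, hp, mul_sub, mul_inv_cancel_left₀ hρ]
  ring

theorem sum_mul_sq_sub_eq_zero_iff (c : ℝ) (hp : ∀ a, 0 ≤ p a) :
    ∑ a, p a * (f a - c) ^ 2 = 0 ↔ ∀ a, 0 < p a → f a = c := by
  rw [sum_eq_zero_iff_of_nonneg fun a _ => mul_nonneg (hp a) (sq_nonneg _)]
  refine forall_congr' fun a => ?_
  simp only [mem_univ, true_implies, mul_eq_zero, pow_eq_zero_iff two_ne_zero, sub_eq_zero]
  exact ⟨fun h hpos => h.resolve_left hpos.ne', fun h => (hp a).eq_or_lt.imp Eq.symm h⟩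

end WeightedVariance

/-- Along solutions of the rate-adjusted replicator dynamics, the
potential `F₀` is nonincreasing:
`dF₀/dt = Σᵢ λᵢρᵢ [ωᵢ(x)² − ρᵢ⁻¹ Σ_α x_{iα} ω_{iα}(x)²] ≤ 0`, with equality iff
`ω_{iα}(x) = ωᵢ(x)` on the support of `x`. -/
theorem stmt7 {ι : Type*} [Fintype ι] [DecidableEq ι]
    {A : ι → Type*} [∀ i, Fintype (A i)] [∀ i, DecidableEq (A i)]
    (ρ lam : ι → ℝ) (hρ : ∀ i, 0 < ρ i) (hlam : ∀ i, 0 < lam i)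
    (ω : (Σ i, A i) → ((Σ i, A i) → ℝ) → ℝ)
    (wbar : ι → ((Σ i, A i) → ℝ) → ℝ)
    (hwbar : ∀ i x, wbar i x = (ρ i)⁻¹ * ∑ α : A i, x ⟨i, α⟩ * ω ⟨i, α⟩ x)
    (F0 : ((Σ i, A i) → ℝ) → ℝ)
    (hF0diff : Differentiable ℝ F0)
    (hF0 : ∀ (z : (Σ i, A i) → ℝ) (a : Σ i, A i),
      HasDerivAt (fun s => F0 (Function.update z a s)) (ω a z) (z a))
    (x : ℝ → (Σ i, A i) → ℝ)
    (hode : ∀ (a : Σ i, A i) (t : ℝ),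
      HasDerivAt (fun s => x s a) (lam a.1 * x t a * (wbar a.1 (x t) - ω a (x t))) t)
    (hΔ : ∀ t, (∀ a, 0 ≤ x t a) ∧ ∀ i, ∑ α : A i, x t ⟨i, α⟩ = ρ i)
    (t : ℝ) :
    HasDerivAt (fun s => F0 (x s))
        (∑ i, lam i * ρ i * ((wbar i (x t)) ^ 2 -
          (ρ i)⁻¹ * ∑ α : A i, x t ⟨i, α⟩ * (ω ⟨i, α⟩ (x t)) ^ 2)) t ∧
      (∑ i, lam i * ρ i * ((wbar i (x t)) ^ 2 -
          (ρ i)⁻¹ * ∑ α : A i, x t ⟨i, α⟩ * (ω ⟨i, α⟩ (x t)) ^ 2)) ≤ 0 ∧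
      ((∑ i, lam i * ρ i * ((wbar i (x t)) ^ 2 -
          (ρ i)⁻¹ * ∑ α : A i, x t ⟨i, α⟩ * (ω ⟨i, α⟩ (x t)) ^ 2)) = 0 ↔
        ∀ a : Σ i, A i, 0 < x t a → ω a (x t) = wbar a.1 (x t)) := by
  have hmean : ∀ i, ∑ α : A i, x t ⟨i, α⟩ * ω ⟨i, α⟩ (x t) = ρ i * wbar i (x t) := fun i => by
    rw [hwbar, mul_inv_cancel_left₀ (hρ i).ne']
  have hvariance : ∀ i, lam i * ρ i * ((wbar i (x t)) ^ 2 -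
      (ρ i)⁻¹ * ∑ α : A i, x t ⟨i, α⟩ * (ω ⟨i, α⟩ (x t)) ^ 2)
      = -(lam i * ∑ α : A i, x t ⟨i, α⟩ * (ω ⟨i, α⟩ (x t) - wbar i (x t)) ^ 2) := fun i => by
    rw [mul_assoc, mul_sq_mean_sub_eq_neg_sum_mul_sq_sub _ _ ((hΔ t).2 i) (hmean i) (hρ i).ne',
      mul_neg]
  have hnonneg : ∀ i, 0 ≤ lam i * ∑ α : A i, x t ⟨i, α⟩ * (ω ⟨i, α⟩ (x t) - wbar i (x t)) ^ 2 :=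
    fun i => mul_nonneg (hlam i).le
      (sum_nonneg fun α _ => mul_nonneg ((hΔ t).1 _) (sq_nonneg _))
  refine ⟨?_, ?_, ?_⟩
  · refine ((hasDerivAt_pi.2 fun a => hode a t).comp_of_hasDerivAt_update (hF0diff _)
      (hF0 (x t))).congr_deriv ?_
    rw [Fintype.sum_sigma]
    refine sum_congr rfl fun i _ => ?_
    rw [mul_assoc, ← sum_mul_mean_sub_mul_self _ _ (hmean i) (hρ i).ne', mul_sum]
    exact sum_congr rfl fun α _ => by ring
  · simp_rw [hvariance]
    exact sum_nonpos fun i _ => neg_nonpos.2 (hnonneg i)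
  · simp_rw [hvariance, sum_neg_distrib, neg_eq_zero,
      sum_eq_zero_iff_of_nonneg fun i _ => hnonneg i, mul_eq_zero, (hlam _).ne', false_or,
      sum_mul_sq_sub_eq_zero_iff _ _ _ fun α => (hΔ t).1 _, Sigma.forall]
    simp
end

section
/- The time derivative of the relative entropy H_q(x) = Σ_{α: q_{iα}>0} q_{iα} log(q_{iα}/x_{iα}) along the replicator dynamics ẋ_{iα} = x_{iα}(ωᵢ(x) − ω_{iα}(x)) equals −L_q(x), where L_q(x) = Σ_{i,α}(x_{iα} − q_{iα}) ω_{iα}(x) is the adjoint potential; moreover L_q(x) = Σ_r (y_r − y*_r) φ_r(y_r) where y = P(x), y* = P(q). -/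
/-!
Differentiating `q log (q / x)` along `ẋ = x (ω̄ - ω)` gives `q (ω - ω̄)`, so
`d/dt H_q = Σ q ω - Σ q ω̄`. Since `q` has mass `ρᵢ` on each population and `ω̄ᵢ` is the
`x`-average of `ω` with weight `ρᵢ⁻¹`, we get `Σ q ω̄ = Σ x ω`, whence `d/dt H_q = -L_q`.
The second identity is an exchange of summation between strategies and resources.
-/

open Finset Real

lemma ite_pos_mul_log_div_eq {c : ℝ} (hc : 0 ≤ c) (y : ℝ) :
    (if 0 < c then c * log (c / y) else 0) = c * log (c / y) := by
  rcases hc.lt_or_eq with hc | rfl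
  · rw [if_pos hc]
  · simp

lemma hasDerivAt_const_mul_log_const_div {f : ℝ → ℝ} {g t : ℝ}
    (hf : HasDerivAt f (f t * g) t) (hft : f t ≠ 0) (c : ℝ) :
    HasDerivAt (fun s => c * log (c / f s)) (-(c * g)) t := by
  rcases eq_or_ne c 0 with rfl | hc
  · simpa using hasDerivAt_const t (0 : ℝ)
  have h : HasDerivAt (fun s => c * log (c / f s))
      (c * ((0 * f t - c * (f t * g)) / f t ^ 2 / (c / f t))) t :=
    (((hasDerivAt_const t c).div hf hft).log (div_ne_zero hc hft)).const_mul c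
  convert h using 1
  field_simp
  ring

lemma Finset.sum_sigma_mul_inv_mul_sum {ι : Type*} [Fintype ι] {A : ι → Type*}
    [∀ i, Fintype (A i)] {ρ : ι → ℝ} (hρ : ∀ i, ρ i ≠ 0) {q : (Σ i, A i) → ℝ}
    (hq : ∀ i, ∑ α : A i, q ⟨i, α⟩ = ρ i) (v : (Σ i, A i) → ℝ) :
    ∑ a : Σ i, A i, q a * ((ρ a.1)⁻¹ * ∑ α : A a.1, v ⟨a.1, α⟩) = ∑ a, v a := by
  rw [← univ_sigma_univ, sum_sigma, sum_sigma]
  refine sum_congr rfl fun i _ => ?_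
  change ∑ α, q ⟨i, α⟩ * ((ρ i)⁻¹ * ∑ β, v ⟨i, β⟩) = _
  rw [← sum_mul, hq, mul_inv_cancel_left₀ (hρ i)]

lemma Finset.sum_mul_sum_mem_comm {α E : Type*} [Fintype α] [Fintype E]
    [DecidableEq E] (inc : α → Finset E) (z : α → ℝ) (ψ : E → ℝ) :
    ∑ a, z a * ∑ r ∈ inc a, ψ r = ∑ r, (∑ a, if r ∈ inc a then z a else 0) * ψ r := by
  simp only [mul_sum, sum_mul, ite_mul, zero_mul]
  rw [sum_comm]
  simp only [sum_ite_mem, univ_inter]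

theorem stmt9_general {ι : Type*} [Fintype ι] {A : ι → Type*} [∀ i, Fintype (A i)]
    {E : Type*} [Fintype E] [DecidableEq E]
    (ρ : ι → ℝ) (hρ : ∀ i, 0 < ρ i)
    (inc : (Σ i, A i) → Finset E)
    (φ : E → ℝ → ℝ)
    (load : ((Σ i, A i) → ℝ) → E → ℝ)
    (hload : ∀ x r, load x r = ∑ a : Σ i, A i, (if r ∈ inc a then x a else 0))
    (ω : (Σ i, A i) → ((Σ i, A i) → ℝ) → ℝ)
    (hω : ∀ a x, ω a x = ∑ r ∈ inc a, φ r (load x r))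
    (wbar : ι → ((Σ i, A i) → ℝ) → ℝ)
    (hwbar : ∀ i x, wbar i x = (ρ i)⁻¹ * ∑ α : A i, x ⟨i, α⟩ * ω ⟨i, α⟩ x)
    (q : (Σ i, A i) → ℝ)
    (hq : (∀ a, 0 ≤ q a) ∧ ∀ i, ∑ α : A i, q ⟨i, α⟩ = ρ i)
    (Hq : ((Σ i, A i) → ℝ) → ℝ)
    (hHq : ∀ x, Hq x = ∑ a : Σ i, A i,
      (if 0 < q a then q a * Real.log (q a / x a) else 0))
    (x : ℝ → (Σ i, A i) → ℝ)
    (hode : ∀ (a : Σ i, A i) (t : ℝ),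
      HasDerivAt (fun s => x s a) (x t a * (wbar a.1 (x t) - ω a (x t))) t)
    (hint : ∀ t, (∀ a, 0 < x t a) ∧ ∀ i, ∑ α : A i, x t ⟨i, α⟩ = ρ i)
    (t : ℝ) :
    HasDerivAt (fun s => Hq (x s)) (-∑ a : Σ i, A i, (x t a - q a) * ω a (x t)) t ∧
      ∑ a : Σ i, A i, (x t a - q a) * ω a (x t)
        = ∑ r, (load (x t) r - load q r) * φ r (load (x t) r) := by
  obtain ⟨hq0, hqρ⟩ := hq
  have hH : ∀ s, Hq (x s) = ∑ a, q a * log (q a / x s a) := fun s => by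
    simp only [hHq, ite_pos_mul_log_div_eq (hq0 _)]
  have hderiv : HasDerivAt (fun s => Hq (x s))
      (∑ a, -(q a * (wbar a.1 (x t) - ω a (x t)))) t := by
    simp only [hH]
    exact HasDerivAt.fun_sum fun a _ =>
      hasDerivAt_const_mul_log_const_div (hode a t) ((hint t).1 a).ne' (q a)
  have hmean : ∑ a, q a * wbar a.1 (x t) = ∑ a, x t a * ω a (x t) := by
    simp only [hwbar]
    exact sum_sigma_mul_inv_mul_sum (fun i => (hρ i).ne') hqρ fun a => x t a * ω a (x t)
  refine ⟨hderiv.congr_deriv ?_, ?_⟩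
  · calc ∑ a, -(q a * (wbar a.1 (x t) - ω a (x t)))
        = ∑ a, q a * ω a (x t) - ∑ a, q a * wbar a.1 (x t) := by
          rw [← sum_sub_distrib]; exact sum_congr rfl fun a _ => by ring
      _ = -∑ a, (x t a - q a) * ω a (x t) := by
          rw [hmean, ← sum_sub_distrib, ← sum_neg_distrib]
          exact sum_congr rfl fun a _ => by ring
  · simp only [hω, sum_mul_sum_mem_comm, hload, ← sum_sub_distrib, ite_sub_ite, sub_zero]

/-- Along the replicator dynamics, the time derivative of the
relative entropy `H_q` equals `-L_q(x)`, where
`L_q(x) = Σ_{i,α} (x_{iα} - q_{iα}) ω_{iα}(x)` is the adjoint potential; moreover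
`L_q(x) = Σ_r (y_r - y*_r) φ_r(y_r)` with `y = P(x)`, `y* = P(q)`. -/
theorem stmt9 {ι : Type*} [Fintype ι] {A : ι → Type*} [∀ i, Fintype (A i)]
    {E : Type*} [Fintype E] [DecidableEq E]
    (ρ : ι → ℝ) (hρ : ∀ i, 0 < ρ i)
    (inc : (Σ i, A i) → Finset E)
    (φ : E → ℝ → ℝ)
    (load : ((Σ i, A i) → ℝ) → E → ℝ)
    (hload : ∀ x r, load x r = ∑ a : Σ i, A i, (if r ∈ inc a then x a else 0))
    (ω : (Σ i, A i) → ((Σ i, A i) → ℝ) → ℝ)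
    (hω : ∀ a x, ω a x = ∑ r ∈ inc a, φ r (load x r))
    (wbar : ι → ((Σ i, A i) → ℝ) → ℝ)
    (hwbar : ∀ i x, wbar i x = (ρ i)⁻¹ * ∑ α : A i, x ⟨i, α⟩ * ω ⟨i, α⟩ x)
    (q : (Σ i, A i) → ℝ)
    (hq : (∀ a, 0 ≤ q a) ∧ ∀ i, ∑ α : A i, q ⟨i, α⟩ = ρ i)
    (hqW : ∀ i, ∀ α β : A i, 0 < q ⟨i, α⟩ → ω ⟨i, α⟩ q ≤ ω ⟨i, β⟩ q)
    (Hq : ((Σ i, A i) → ℝ) → ℝ)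
    (hHq : ∀ x, Hq x = ∑ a : Σ i, A i,
      (if 0 < q a then q a * Real.log (q a / x a) else 0))
    (x : ℝ → (Σ i, A i) → ℝ)
    (hode : ∀ (a : Σ i, A i) (t : ℝ),
      HasDerivAt (fun s => x s a) (x t a * (wbar a.1 (x t) - ω a (x t))) t)
    (hint : ∀ t, (∀ a, 0 < x t a) ∧ ∀ i, ∑ α : A i, x t ⟨i, α⟩ = ρ i)
    (t : ℝ) :
    HasDerivAt (fun s => Hq (x s)) (-∑ a : Σ i, A i, (x t a - q a) * ω a (x t)) t ∧
      ∑ a : Σ i, A i, (x t a - q a) * ω a (x t)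
        = ∑ r, (load (x t) r - load q r) * φ r (load (x t) r) :=
  stmt9_general ρ hρ inc φ load hload ω hω wbar hwbar q hq Hq hHq x hode hint t
end

section
/- If q is a Wardrop equilibrium of an irreducible network (ker Q = 0) with strictly increasing latencies, then the relative entropy H_q(x) = Σ_{α: q_{iα}>0} q_{iα} log(q_{iα}/x_{iα}) is a Lyapunov function for the replicator dynamics: H_q(q) = 0, H_q(x) > 0 for x ≠ q (with q ≪ x), and its time derivative along the dynamics is zero exactly on the Wardrop set and strictly negative elsewhere. -/
/-- In an irreducible network (`ker Q = 0`) with strictly increasing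
latencies, the relative entropy `H_q` of a Wardrop equilibrium `q` is a Lyapunov
function for the replicator dynamics: `H_q(q) = 0`, `H_q(x) > 0` for `x ≠ q` with
`q ≪ x`, and its time derivative `Ḣ_q(x) = -Σ q_{iα}(ωᵢ(x) - ω_{iα}(x))` vanishes
exactly on the Wardrop set and is strictly negative elsewhere. -/
theorem stmt11 {ι : Type*} [Fintype ι] {A : ι → Type*} [∀ i, Fintype (A i)]
    {E : Type*} [Fintype E] [DecidableEq E]
    (ρ : ι → ℝ) (hρ : ∀ i, 0 < ρ i)
    (inc : (Σ i, A i) → Finset E)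
    (φ : E → ℝ → ℝ) (hmono : ∀ r, StrictMono (φ r)) (hcont : ∀ r, Continuous (φ r))
    (load : ((Σ i, A i) → ℝ) → E → ℝ)
    (hload : ∀ x r, load x r = ∑ a : Σ i, A i, (if r ∈ inc a then x a else 0))
    (ω : (Σ i, A i) → ((Σ i, A i) → ℝ) → ℝ)
    (hω : ∀ a x, ω a x = ∑ r ∈ inc a, φ r (load x r))
    (wbar : ι → ((Σ i, A i) → ℝ) → ℝ)
    (hwbar : ∀ i x, wbar i x = (ρ i)⁻¹ * ∑ α : A i, x ⟨i, α⟩ * ω ⟨i, α⟩ x)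
    (Δset : Set ((Σ i, A i) → ℝ))
    (hΔ : Δset = {x | (∀ a, 0 ≤ x a) ∧ ∀ i, ∑ α : A i, x ⟨i, α⟩ = ρ i})
    (IsWardrop : ((Σ i, A i) → ℝ) → Prop)
    (hWdef : ∀ x, IsWardrop x ↔ x ∈ Δset ∧
      ∀ i, ∀ α β : A i, 0 < x ⟨i, α⟩ → ω ⟨i, α⟩ x ≤ ω ⟨i, β⟩ x)
    (P : ((Σ i, A i) → ℝ) →ₗ[ℝ] (E → ℝ))
    (hP : ∀ x r, P x r = load x r)
    (Z : Submodule ℝ ((Σ i, A i) → ℝ))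
    (hZ : ∀ z, z ∈ Z ↔ ∀ i, ∑ α : A i, z ⟨i, α⟩ = 0)
    (hirr : LinearMap.ker (P.domRestrict Z) = ⊥)
    (q : (Σ i, A i) → ℝ) (hqW : IsWardrop q)
    (Hq : ((Σ i, A i) → ℝ) → ℝ)
    (hHq : ∀ x, Hq x = ∑ a : Σ i, A i,
      (if 0 < q a then q a * Real.log (q a / x a) else 0))
    (Hdot : ((Σ i, A i) → ℝ) → ℝ)
    (hHdot : ∀ x, Hdot x = -∑ a : Σ i, A i, q a * (wbar a.1 x - ω a x)) :
    Hq q = 0 ∧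
      (∀ x ∈ Δset, (∀ a, 0 < q a → 0 < x a) → x ≠ q → 0 < Hq x) ∧
      (∀ x ∈ Δset, (Hdot x = 0 ↔ IsWardrop x) ∧ (¬ IsWardrop x → Hdot x < 0)) := by
  classical
  have hΔmem : ∀ x, x ∈ Δset ↔ (∀ a, 0 ≤ x a) ∧ ∀ i, ∑ α : A i, x ⟨i, α⟩ = ρ i := by
    intro x; rw [hΔ]; rfl
  have sigma : ∀ f : (Σ i, A i) → ℝ, ∑ a : Σ i, A i, f a = ∑ i, ∑ α : A i, f ⟨i, α⟩ :=
    fun f => (Finset.sum_sigma' Finset.univ (fun _ => Finset.univ) (fun i α => f ⟨i, α⟩)).symm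
  obtain ⟨hqΔ, hqmin⟩ := (hWdef q).1 hqW
  obtain ⟨hq0, hqsum⟩ := (hΔmem q).1 hqΔ
  -- Part 1
  have part1 : Hq q = 0 := by
    rw [hHq]
    refine Finset.sum_eq_zero fun a _ => ?_
    split_ifs with h
    · rw [div_self h.ne', Real.log_one, mul_zero]
    · rfl
  -- Part 2
  have part2 : ∀ x ∈ Δset, (∀ a, 0 < q a → 0 < x a) → x ≠ q → 0 < Hq x := by
    intro x hx habs hne
    obtain ⟨hx0, hxsum⟩ := (hΔmem x).1 hx
    have hsums : ∑ a : Σ i, A i, q a = ∑ a : Σ i, A i, x a := by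
      rw [sigma q, sigma x]
      exact Finset.sum_congr rfl fun i _ => by rw [hqsum i, hxsum i]
    have hterm : ∀ a : Σ i, A i, (if 0 < q a then q a - x a else 0) ≤
        (if 0 < q a then q a * Real.log (q a / x a) else 0) := by
      intro a
      split_ifs with h
      · have hxa := habs a h
        have hlog : Real.log (x a / q a) ≤ x a / q a - 1 :=
          Real.log_le_sub_one_of_pos (div_pos hxa h)
        have h1 : q a * Real.log (x a / q a) ≤ q a * (x a / q a - 1) :=
          mul_le_mul_of_nonneg_left hlog h.le
        have h2 : q a * (x a / q a - 1) = x a - q a := by field_simp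
        have h3 : Real.log (q a / x a) = -Real.log (x a / q a) := by
          rw [Real.log_div h.ne' hxa.ne', Real.log_div hxa.ne' h.ne']; ring
        rw [h3, mul_neg]; linarith
      · exact le_rfl
    have he1 : ∀ a : Σ i, A i, (if 0 < q a then q a - x a else 0) =
        q a - (if 0 < q a then x a else 0) := by
      intro a
      split_ifs with h
      · ring
      · rw [le_antisymm (not_lt.1 h) (hq0 a), sub_zero]
    have hsum1 : ∑ a : Σ i, A i, (if 0 < q a then q a - x a else 0) =
        ∑ a : Σ i, A i, q a - ∑ a : Σ i, A i, (if 0 < q a then x a else 0) := by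
      rw [← Finset.sum_sub_distrib]
      exact Finset.sum_congr rfl fun a _ => he1 a
    obtain ⟨a₀, ha₀⟩ := Function.ne_iff.1 hne
    rw [hHq]
    by_cases hq : 0 < q a₀
    · have hxa := habs a₀ hq
      have hne1 : x a₀ / q a₀ ≠ 1 := by
        intro h
        exact ha₀ (by field_simp at h; linarith)
      have hlog : Real.log (x a₀ / q a₀) < x a₀ / q a₀ - 1 :=
        Real.log_lt_sub_one_of_pos (div_pos hxa hq) hne1
      have h1 : q a₀ * Real.log (x a₀ / q a₀) < q a₀ * (x a₀ / q a₀ - 1) :=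
        (mul_lt_mul_iff_right₀ hq).2 hlog
      have h2 : q a₀ * (x a₀ / q a₀ - 1) = x a₀ - q a₀ := by field_simp
      have h3 : Real.log (q a₀ / x a₀) = -Real.log (x a₀ / q a₀) := by
        rw [Real.log_div hq.ne' hxa.ne', Real.log_div hxa.ne' hq.ne']; ring
      have hstrict : (if 0 < q a₀ then q a₀ - x a₀ else 0) <
          (if 0 < q a₀ then q a₀ * Real.log (q a₀ / x a₀) else 0) := by
        rw [if_pos hq, if_pos hq, h3, mul_neg]; linarith
      have hlt : ∑ a : Σ i, A i, (if 0 < q a then q a - x a else 0) <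
          ∑ a : Σ i, A i, (if 0 < q a then q a * Real.log (q a / x a) else 0) :=
        Finset.sum_lt_sum (fun a _ => hterm a) ⟨a₀, Finset.mem_univ _, hstrict⟩
      have he2 : ∑ a : Σ i, A i, (if 0 < q a then x a else 0) ≤ ∑ a : Σ i, A i, x a :=
        Finset.sum_le_sum fun a _ => by split_ifs; exacts [le_rfl, hx0 a]
      rw [hsum1] at hlt; linarith
    · have hqa0 : q a₀ = 0 := le_antisymm (not_lt.1 hq) (hq0 a₀)
      have hxa0 : 0 < x a₀ := (hx0 a₀).lt_of_ne (fun h => ha₀ (by rw [hqa0, ← h]))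
      have he2 : ∑ a : Σ i, A i, (if 0 < q a then x a else 0) < ∑ a : Σ i, A i, x a := by
        refine Finset.sum_lt_sum (fun a _ => by split_ifs; exacts [le_rfl, hx0 a])
          ⟨a₀, Finset.mem_univ _, ?_⟩
        rw [if_neg hq]; exact hxa0
      have hle : ∑ a : Σ i, A i, (if 0 < q a then q a - x a else 0) ≤
          ∑ a : Σ i, A i, (if 0 < q a then q a * Real.log (q a / x a) else 0) :=
        Finset.sum_le_sum fun a _ => hterm a
      rw [hsum1] at hle; linarith
  -- key algebraic identity
  have key : ∀ u v w : (Σ i, A i) → ℝ, ∑ a : Σ i, A i, (u a - v a) * ω a w =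
      ∑ r : E, (load u r - load v r) * φ r (load w r) := by
    intro u v w
    have h1 : ∀ a : Σ i, A i, (u a - v a) * ω a w =
        ∑ r : E, (if r ∈ inc a then (u a - v a) * φ r (load w r) else 0) := by
      intro a
      rw [Finset.sum_ite_mem, Finset.univ_inter, hω, Finset.mul_sum]
    rw [Finset.sum_congr rfl fun a _ => h1 a, Finset.sum_comm]
    refine Finset.sum_congr rfl fun r _ => ?_
    have h2 : load u r - load v r = ∑ a : Σ i, A i, (if r ∈ inc a then u a - v a else 0) := by
      rw [hload, hload, ← Finset.sum_sub_distrib]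
      exact Finset.sum_congr rfl fun a _ => by split_ifs <;> ring
    rw [h2, Finset.sum_mul]
    exact Finset.sum_congr rfl fun a _ => by split_ifs <;> ring
  -- Hdot rewriting
  have hHdot' : ∀ x ∈ Δset, Hdot x = -∑ a : Σ i, A i, (x a - q a) * ω a x := by
    intro x hx
    obtain ⟨hx0, hxsum⟩ := (hΔmem x).1 hx
    rw [hHdot]
    have hqw : ∑ a : Σ i, A i, q a * wbar a.1 x = ∑ a : Σ i, A i, x a * ω a x := by
      rw [sigma (fun a => q a * wbar a.1 x), sigma (fun a => x a * ω a x)]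
      refine Finset.sum_congr rfl fun i _ => ?_
      show ∑ α : A i, q ⟨i, α⟩ * wbar i x = ∑ α : A i, x ⟨i, α⟩ * ω ⟨i, α⟩ x
      rw [← Finset.sum_mul, hqsum i, hwbar]
      rw [← mul_assoc, mul_inv_cancel₀ (hρ i).ne', one_mul]
    have e1 : ∑ a : Σ i, A i, q a * (wbar a.1 x - ω a x) =
        ∑ a : Σ i, A i, q a * wbar a.1 x - ∑ a : Σ i, A i, q a * ω a x := by
      rw [← Finset.sum_sub_distrib]
      exact Finset.sum_congr rfl fun a _ => mul_sub _ _ _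
    have e2 : ∑ a : Σ i, A i, (x a - q a) * ω a x =
        ∑ a : Σ i, A i, x a * ω a x - ∑ a : Σ i, A i, q a * ω a x := by
      rw [← Finset.sum_sub_distrib]
      exact Finset.sum_congr rfl fun a _ => sub_mul _ _ _
    rw [e1, e2, hqw]
  -- variational inequality at a Wardrop point
  have VI : ∀ w, IsWardrop w → ∀ z ∈ Δset, 0 ≤ ∑ a : Σ i, A i, (z a - w a) * ω a w := by
    intro w hw z hz
    obtain ⟨hwΔ, hwmin⟩ := (hWdef w).1 hw
    obtain ⟨hw0, hwsum⟩ := (hΔmem w).1 hwΔ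
    obtain ⟨hz0, hzsum⟩ := (hΔmem z).1 hz
    rw [sigma]
    refine Finset.sum_nonneg fun i _ => ?_
    have hex : ∃ α₀ : A i, 0 < w ⟨i, α₀⟩ := by
      by_contra h
      push_neg at h
      have h0 : ∑ α : A i, w ⟨i, α⟩ = 0 :=
        Finset.sum_eq_zero fun α _ => le_antisymm (h α) (hw0 _)
      rw [hwsum] at h0
      exact absurd h0 (hρ i).ne'
    obtain ⟨α₀, hα₀⟩ := hex
    have hlower : ∀ β : A i, ω ⟨i, α₀⟩ w ≤ ω ⟨i, β⟩ w := fun β => hwmin i α₀ β hα₀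
    have h1 : ∑ α : A i, w ⟨i, α⟩ * ω ⟨i, α⟩ w = ρ i * ω ⟨i, α₀⟩ w := by
      rw [← hwsum i, Finset.sum_mul]
      refine Finset.sum_congr rfl fun α _ => ?_
      rcases eq_or_lt_of_le (hw0 ⟨i, α⟩) with h | h
      · rw [← h, zero_mul, zero_mul]
      · rw [le_antisymm (hwmin i α α₀ h) (hlower α)]
    have h2 : ρ i * ω ⟨i, α₀⟩ w ≤ ∑ α : A i, z ⟨i, α⟩ * ω ⟨i, α⟩ w := by
      rw [← hzsum i, Finset.sum_mul]
      exact Finset.sum_le_sum fun α _ => mul_le_mul_of_nonneg_left (hlower α) (hz0 _)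
    have h3 : ∑ α : A i, (z ⟨i, α⟩ - w ⟨i, α⟩) * ω ⟨i, α⟩ w =
        ∑ α : A i, z ⟨i, α⟩ * ω ⟨i, α⟩ w - ∑ α : A i, w ⟨i, α⟩ * ω ⟨i, α⟩ w := by
      rw [← Finset.sum_sub_distrib]
      exact Finset.sum_congr rfl fun α _ => sub_mul _ _ _
    rw [h3, h1]; linarith
  -- cross terms
  have crossnn : ∀ (r : E) (s t : ℝ), 0 ≤ (s - t) * (φ r s - φ r t) := by
    intro r s t
    rcases le_total t s with h | h
    · exact mul_nonneg (by linarith) (by linarith [(hmono r).monotone h])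
    · have : (s - t) * (φ r s - φ r t) = (t - s) * (φ r t - φ r s) := by ring
      rw [this]
      exact mul_nonneg (by linarith) (by linarith [(hmono r).monotone h])
  have crosspos : ∀ (r : E) (s t : ℝ), s ≠ t → 0 < (s - t) * (φ r s - φ r t) := by
    intro r s t hst
    rcases lt_or_gt_of_ne hst with h | h
    · have : (s - t) * (φ r s - φ r t) = (t - s) * (φ r t - φ r s) := by ring
      rw [this]
      exact mul_pos (by linarith) (by linarith [hmono r h])
    · exact mul_pos (by linarith) (by linarith [hmono r h])
  have decomp : ∀ x : (Σ i, A i) → ℝ, ∑ a : Σ i, A i, (x a - q a) * ω a x =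
      (∑ r : E, (load x r - load q r) * (φ r (load x r) - φ r (load q r))) +
        ∑ a : Σ i, A i, (x a - q a) * ω a q := by
    intro x
    rw [key x q x, key x q q, ← Finset.sum_add_distrib]
    exact Finset.sum_congr rfl fun r _ => by ring
  -- Part 3
  refine ⟨part1, part2, fun x hx => ?_⟩
  obtain ⟨hx0, hxsum⟩ := (hΔmem x).1 hx
  have hA : 0 ≤ ∑ r : E, (load x r - load q r) * (φ r (load x r) - φ r (load q r)) :=
    Finset.sum_nonneg fun r _ => crossnn r _ _
  have hB : 0 ≤ ∑ a : Σ i, A i, (x a - q a) * ω a q := VI q hqW x hx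
  have hiff : Hdot x = 0 ↔ IsWardrop x := by
    constructor
    · intro h0
      rw [hHdot' x hx, neg_eq_zero, decomp] at h0
      have hA0 : ∑ r : E, (load x r - load q r) * (φ r (load x r) - φ r (load q r)) = 0 := by
        linarith
      have hloads : ∀ r, load x r = load q r := by
        intro r
        by_contra hne
        have := (Finset.sum_eq_zero_iff_of_nonneg fun r _ => crossnn r _ _).1 hA0 r
          (Finset.mem_univ r)
        exact absurd this (crosspos r _ _ hne).ne'
      have hzZ : (x - q) ∈ Z := by
        rw [hZ]
        intro i
        simp only [Pi.sub_apply]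
        rw [Finset.sum_sub_distrib, hxsum i, hqsum i, sub_self]
      have hPz : P (x - q) = 0 := by
        funext r
        rw [map_sub]
        simp only [Pi.sub_apply, Pi.zero_apply]
        rw [hP, hP, hloads, sub_self]
      have hk : (⟨x - q, hzZ⟩ : Z) ∈ LinearMap.ker (P.domRestrict Z) := by
        rw [LinearMap.mem_ker, LinearMap.domRestrict_apply]
        exact hPz
      rw [hirr, Submodule.mem_bot] at hk
      have hxq : x = q := by
        have := congrArg Subtype.val hk
        exact sub_eq_zero.1 this
      rw [hxq]; exact hqW
    · intro hxW
      have hB' : 0 ≤ ∑ a : Σ i, A i, (q a - x a) * ω a x := VI x hxW q hqΔ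
      have hsum0 : ∑ a : Σ i, A i, (q a - x a) * ω a x +
          ∑ a : Σ i, A i, (x a - q a) * ω a x = 0 := by
        rw [← Finset.sum_add_distrib]
        exact Finset.sum_eq_zero fun a _ => by ring
      have hLnn : 0 ≤ ∑ a : Σ i, A i, (x a - q a) * ω a x := by
        rw [decomp]; linarith
      rw [hHdot' x hx, neg_eq_zero]; linarith
  refine ⟨hiff, fun hnW => ?_⟩
  have hle : Hdot x ≤ 0 := by
    rw [hHdot' x hx, decomp]; linarith
  rcases lt_or_eq_of_le hle with h | h
  · exact h
  · exact absurd (hiff.1 h) hnW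
end

section
/- Every interior solution trajectory of the rate-adjusted replicator dynamics in a congestion model with strictly increasing C¹ latencies converges, as t → ∞, to a single Wardrop equilibrium (not merely to the set of Wardrop equilibria). In particular, if the network is irreducible, every interior orbit converges to the unique Wardrop equilibrium. -/
/-!
For a Wardrop equilibrium `p`, the rate-weighted relative entropy
`H_p(x) = ∑ λ⁻¹ p log (p / x)` has derivative `(p - x) ⬝ᵥ c(x)` along the replicator flow, where
`c` is the route-cost vector. Since `p` minimises `y ↦ y ⬝ᵥ c(p)` over the polytope and the
latencies are increasing, this is `≤ 0`, and it vanishes only where the edge loads of `x` are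
those of `p`.

An equilibrium `q` exists because minimisers of the Beckmann potential `∑ᵣ ∫₀^{loadᵣ} φᵣ` are
equilibria. As `H_q ≥ 0` decreases, its derivative comes arbitrarily close to `0` at arbitrarily
late times; a limit point `p` of the trajectory along such times has the edge loads of `q`, so it
is an equilibrium as well. Now `H_p(x(t))` decreases and tends to `0` along a subsequence, hence
tends to `0`, and the Hellinger bound `∑ λ⁻¹ (√p - √x)² ≤ H_p(x)` gives `x(t) → p`. Equilibria
share their edge loads, so when a flow is determined by its loads and commodity masses the
equilibrium is unique.
-/

open Filter Topology Matrix

theorem Monotone.sub_mul_sub_nonneg {f : ℝ → ℝ} (hf : Monotone f) (u v : ℝ) :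
    0 ≤ (u - v) * (f u - f v) := by
  rcases le_total u v with h | h
  · exact mul_nonneg_of_nonpos_of_nonpos (sub_nonpos.2 h) (sub_nonpos.2 (hf h))
  · exact mul_nonneg (sub_nonneg.2 h) (sub_nonneg.2 (hf h))

theorem StrictMono.sub_mul_sub_pos_s13 {f : ℝ → ℝ} (hf : StrictMono f) {u v : ℝ}
    (h : u ≠ v) : 0 < (u - v) * (f u - f v) := by
  rcases h.lt_or_gt with h | h
  · exact mul_pos_of_neg_of_neg (sub_neg.2 h) (sub_neg.2 (hf h))
  · exact mul_pos (sub_pos.2 h) (sub_pos.2 (hf h))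

theorem Real.sq_sqrt_sub_sqrt_le {p y : ℝ} (hp : 0 ≤ p) (hy : 0 < y) :
    (√p - √y) ^ 2 ≤ p * (Real.log p - Real.log y) - (p - y) := by
  rcases hp.eq_or_lt with rfl | hp
  · simp [Real.sq_sqrt hy.le]
  have hs := Real.sqrt_pos.2 hp
  have hu := Real.sqrt_pos.2 hy
  have hlog : Real.log p - Real.log y = 2 * (Real.log √p - Real.log √y) := by
    rw [Real.log_sqrt hp.le, Real.log_sqrt hy.le]; ring
  have hle : Real.log √y - Real.log √p ≤ √y / √p - 1 := by
    rw [← Real.log_div hu.ne' hs.ne']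
    exact Real.log_le_sub_one_of_pos (div_pos hu hs)
  have hdiv : √p * (√y / √p) = √y := mul_div_cancel₀ _ hs.ne'
  rw [hlog]
  nlinarith [mul_le_mul_of_nonneg_left hle hp.le, Real.sq_sqrt hp.le, Real.sq_sqrt hy.le]

theorem dotProduct_le_of_support_subset_argmin {α : Type*} [Fintype α] {q y c : α → ℝ}
    (hq : 0 ≤ q) (hy : 0 ≤ y) (hsum : ∑ a, q a = ∑ a, y a)
    (hc : ∀ a b, 0 < q a → c a ≤ c b) : q ⬝ᵥ c ≤ y ⬝ᵥ c := by
  cases isEmpty_or_nonempty α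
  · simp [dotProduct]
  obtain ⟨b, -, hb⟩ := Finset.univ.exists_min_image c Finset.univ_nonempty
  have hqc : ∀ a, q a * c a = q a * c b := fun a => by
    rcases (hq a).eq_or_lt with h | h
    · simp [← h]
    · rw [le_antisymm (hc a b h) (hb a (Finset.mem_univ _))]
  calc q ⬝ᵥ c = ∑ a, y a * c b := by simp only [dotProduct, hqc, ← Finset.sum_mul, hsum]
    _ ≤ y ⬝ᵥ c := Finset.sum_le_sum fun a _ =>
      mul_le_mul_of_nonneg_left (hb a (Finset.mem_univ _)) (hy a)

theorem exists_seq_tendsto_deriv_zero {f f' : ℝ → ℝ} {m : ℝ}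
    (hf : ∀ t, 0 ≤ t → HasDerivAt f (f' t) t) (hf' : ∀ t, 0 ≤ t → f' t ≤ 0)
    (hm : ∀ t, 0 ≤ t → m ≤ f t) :
    ∃ s : ℕ → ℝ, (∀ n : ℕ, (n : ℝ) ≤ s n) ∧ Tendsto (f' ∘ s) atTop (𝓝 0) := by
  have hfreq : ∀ N : ℝ, 0 ≤ N → ∀ ε > 0, ∃ t, N ≤ t ∧ -ε < f' t := by
    intro N hN ε hε
    by_contra! hle
    set T := N + (f N - m + 1) / ε
    have hNT : N ≤ T := le_add_of_nonneg_right (div_nonneg (by linarith [hm N hN]) hε.le)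
    have hdecay : f T - f N ≤ -ε * (T - N) :=
      (convex_Ici N).image_sub_le_mul_sub_of_deriv_le
        (fun t ht => (hf t (hN.trans ht)).continuousAt.continuousWithinAt)
        (fun t ht => (hf t (hN.trans (interior_subset ht))).differentiableAt.differentiableWithinAt)
        (fun t ht => (hf t (hN.trans (interior_subset ht))).deriv ▸ hle t (interior_subset ht))
        N (Set.mem_Ici.2 le_rfl) T hNT hNT
    have hT : ε * (T - N) = f N - m + 1 := by simp only [T, add_sub_cancel_left]; field_simp
    linarith [hm T (hN.trans hNT)]
  choose s hs hs' using fun n : ℕ => hfreq n n.cast_nonneg (1 / (n + 1)) Nat.one_div_pos_of_nat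
  refine ⟨s, hs, tendsto_of_tendsto_of_tendsto_of_le_of_le ?_ tendsto_const_nhds
    (fun n => (hs' n).le) fun n => hf' _ (n.cast_nonneg.trans (hs n))⟩
  simpa using (tendsto_one_div_add_atTop_nhds_zero_nat (𝕜 := ℝ)).neg

theorem tendsto_of_antitoneOn_of_tendsto_comp {f : ℝ → ℝ} {s : ℕ → ℝ} {L : ℝ}
    (hf : AntitoneOn f (Set.Ici 0)) (hs0 : ∀ n, 0 ≤ s n) (hs : Tendsto s atTop atTop)
    (hfs : Tendsto (f ∘ s) atTop (𝓝 L)) : Tendsto f atTop (𝓝 L) := by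
  have hL : ∀ t, 0 ≤ t → L ≤ f t := fun t ht => le_of_tendsto hfs <|
    (hs.eventually_ge_atTop t).mono fun n hn => hf ht (hs0 n) hn
  refine tendsto_order.2 ⟨fun a ha => ?_, fun a ha => ?_⟩
  · filter_upwards [eventually_ge_atTop 0] with t ht using ha.trans_le (hL t ht)
  · obtain ⟨n, hn⟩ := (hfs.eventually (gt_mem_nhds ha)).exists
    filter_upwards [eventually_ge_atTop (s n)] with t ht using
      (hf (hs0 n) ((hs0 n).trans ht) ht).trans_lt hn

namespace CongestionGame

variable {ι : Type*} {A : ι → Type*} [∀ i, Fintype (A i)]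

def flowPolytope (ρ : ι → ℝ) : Set ((Σ i, A i) → ℝ) :=
  {y | (∀ a, 0 ≤ y a) ∧ ∀ i, ∑ α : A i, y ⟨i, α⟩ = ρ i}

section FlowPolytope

variable {ρ : ι → ℝ}

theorem isCompact_flowPolytope (ρ : ι → ℝ) : IsCompact (flowPolytope (A := A) ρ) := by
  refine (isCompact_univ_pi fun a : Σ i, A i => isCompact_Icc (a := 0) (b := ρ a.1))
    |>.of_isClosed_subset ?_ ?_
  · have : flowPolytope (A := A) ρ =
        (⋂ a, {y | 0 ≤ y a}) ∩ ⋂ i, {y | ∑ α : A i, y ⟨i, α⟩ = ρ i} := by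
      ext y; simp [flowPolytope]
    rw [this]
    exact (isClosed_iInter fun a => isClosed_le continuous_const (continuous_apply a)).inter
      (isClosed_iInter fun i => isClosed_eq (by fun_prop) continuous_const)
  · rintro y ⟨hy0, hysum⟩ ⟨i, α⟩ -
    exact ⟨hy0 _, hysum i ▸ Finset.single_le_sum (fun β _ => hy0 ⟨i, β⟩) (Finset.mem_univ α)⟩

theorem convex_flowPolytope : Convex ℝ (flowPolytope (A := A) ρ) := by
  rintro y ⟨hy0, hysum⟩ z ⟨hz0, hzsum⟩ s t hs ht hst
  refine ⟨fun a => ?_, fun i => ?_⟩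
  · have := hy0 a; have := hz0 a
    simp only [Pi.add_apply, Pi.smul_apply, smul_eq_mul]; positivity
  · simp only [Pi.add_apply, Pi.smul_apply, smul_eq_mul, Finset.sum_add_distrib, ← Finset.mul_sum,
      hysum, hzsum, ← add_mul, hst, one_mul]

theorem sum_pi_single_sigma_mk [DecidableEq ι] [∀ i, DecidableEq (A i)] (j : ι) (β : A j)
    (v : ℝ) (i : ι) :
    ∑ γ : A i, (Pi.single ⟨j, β⟩ v : (Σ i, A i) → ℝ) ⟨i, γ⟩ = if i = j then v else 0 := by
  by_cases h : i = j
  · subst h; simp [Pi.single_apply]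
  · simp [h]

variable [Fintype ι]

theorem isMinOn_dotProduct_iff {q c : (Σ i, A i) → ℝ} (hq : q ∈ flowPolytope ρ) :
    IsMinOn (· ⬝ᵥ c) (flowPolytope ρ) q ↔
      ∀ i (α β : A i), 0 < q ⟨i, α⟩ → c ⟨i, α⟩ ≤ c ⟨i, β⟩ := by
  classical
  refine ⟨fun hmin i α β hα => ?_, fun hc y hy => ?_⟩
  · set d : (Σ i, A i) → ℝ := Pi.single ⟨i, β⟩ (q ⟨i, α⟩) - Pi.single ⟨i, α⟩ (q ⟨i, α⟩)
    have hd : q + d ∈ flowPolytope ρ := by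
      refine ⟨fun a => ?_, fun i' => ?_⟩
      · have hβ : 0 ≤ (Pi.single ⟨i, β⟩ (q ⟨i, α⟩) : (Σ i, A i) → ℝ) a := by
          rw [Pi.single_apply]; split_ifs <;> linarith
        by_cases ha : a = ⟨i, α⟩
        · subst ha; simpa [d] using hβ
        · simpa [d, ha] using add_nonneg (hq.1 a) hβ
      · simp only [Pi.add_apply, Pi.sub_apply, d, Finset.sum_add_distrib, Finset.sum_sub_distrib,
          sum_pi_single_sigma_mk, hq.2, sub_self, add_zero]
    have : q ⬝ᵥ c ≤ (q + d) ⬝ᵥ c := hmin hd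
    simp only [add_dotProduct, sub_dotProduct, single_dotProduct, d] at this
    exact le_of_mul_le_mul_left (by linarith) hα
  · show q ⬝ᵥ c ≤ y ⬝ᵥ c
    simp only [dotProduct, Fintype.sum_sigma]
    exact Finset.sum_le_sum fun i _ => dotProduct_le_of_support_subset_argmin
      (fun α => hq.1 _) (fun α => hy.1 _) ((hq.2 i).trans (hy.2 i).symm) (hc i)

end FlowPolytope

variable [Fintype ι] {E : Type*} [DecidableEq E]

def edgeLoad (inc : (Σ i, A i) → Finset E) : ((Σ i, A i) → ℝ) →ₗ[ℝ] E → ℝ where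
  toFun y r := ∑ a, if r ∈ inc a then y a else 0
  map_add' y z := by ext r; simp [← Finset.sum_add_distrib, ite_add_zero]
  map_smul' c y := by ext r; simp [Finset.mul_sum]

def routeCost (inc : (Σ i, A i) → Finset E) (φ : E → ℝ → ℝ) (y : (Σ i, A i) → ℝ)
    (a : Σ i, A i) : ℝ :=
  ∑ r ∈ inc a, φ r (edgeLoad inc y r)

def IsWardropEq (ρ : ι → ℝ) (inc : (Σ i, A i) → Finset E) (φ : E → ℝ → ℝ)
    (q : (Σ i, A i) → ℝ) : Prop :=
  q ∈ flowPolytope ρ ∧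
    ∀ i (α β : A i), 0 < q ⟨i, α⟩ → routeCost inc φ q ⟨i, α⟩ ≤ routeCost inc φ q ⟨i, β⟩

section Network

variable {ρ : ι → ℝ} {inc : (Σ i, A i) → Finset E} {φ : E → ℝ → ℝ} {p q y z : (Σ i, A i) → ℝ}

theorem continuous_routeCost (hφ : ∀ r, Continuous (φ r)) : Continuous (routeCost inc φ) :=
  continuous_pi fun _ => continuous_finsetSum _ fun r _ =>
    (hφ r).comp ((continuous_apply r).comp (edgeLoad inc).continuous_of_finiteDimensional)

theorem isWardropEq_iff :
    IsWardropEq ρ inc φ q ↔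
      q ∈ flowPolytope ρ ∧ IsMinOn (· ⬝ᵥ routeCost inc φ q) (flowPolytope ρ) q :=
  ⟨fun h => ⟨h.1, (isMinOn_dotProduct_iff h.1).2 h.2⟩,
    fun h => ⟨h.1, (isMinOn_dotProduct_iff h.1).1 h.2⟩⟩

variable [Fintype E]

theorem edgeLoad_dotProduct (z : (Σ i, A i) → ℝ) (g : E → ℝ) :
    edgeLoad inc z ⬝ᵥ g = z ⬝ᵥ fun a => ∑ r ∈ inc a, g r := by
  simp only [dotProduct, edgeLoad, LinearMap.coe_mk, AddHom.coe_mk, Finset.sum_mul,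
    Finset.mul_sum, ite_mul, zero_mul]
  rw [Finset.sum_comm]
  simp [Finset.sum_ite_mem]

theorem dotProduct_routeCost (z y : (Σ i, A i) → ℝ) :
    z ⬝ᵥ routeCost inc φ y = edgeLoad inc z ⬝ᵥ fun r => φ r (edgeLoad inc y r) :=
  (edgeLoad_dotProduct z _).symm

theorem sub_dotProduct_routeCost_sub :
    (y - z) ⬝ᵥ (routeCost inc φ y - routeCost inc φ z) =
      ∑ r, (edgeLoad inc y r - edgeLoad inc z r) *
        (φ r (edgeLoad inc y r) - φ r (edgeLoad inc z r)) := by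
  have : routeCost inc φ y - routeCost inc φ z =
      fun a => ∑ r ∈ inc a, (φ r (edgeLoad inc y r) - φ r (edgeLoad inc z r)) := by
    ext a; simp [routeCost, Finset.sum_sub_distrib]
  rw [this, ← edgeLoad_dotProduct, map_sub]
  rfl

theorem sub_dotProduct_routeCost_sub_nonneg (hφ : ∀ r, Monotone (φ r)) :
    0 ≤ (y - z) ⬝ᵥ (routeCost inc φ y - routeCost inc φ z) := by
  rw [sub_dotProduct_routeCost_sub]
  exact Finset.sum_nonneg fun r _ => (hφ r).sub_mul_sub_nonneg _ _

theorem edgeLoad_eq_of_sub_dotProduct_routeCost_sub_nonpos (hφ : ∀ r, StrictMono (φ r))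
    (h : (y - z) ⬝ᵥ (routeCost inc φ y - routeCost inc φ z) ≤ 0) :
    edgeLoad inc y = edgeLoad inc z := by
  rw [sub_dotProduct_routeCost_sub] at h
  by_contra hne
  obtain ⟨r, hr⟩ := Function.ne_iff.1 hne
  refine h.not_gt (Finset.sum_pos' (fun r _ => (hφ r).monotone.sub_mul_sub_nonneg _ _)
    ⟨r, Finset.mem_univ r, (hφ r).sub_mul_sub_pos_s13 hr⟩)

theorem IsWardropEq.sub_dotProduct_routeCost_nonpos (hφ : ∀ r, Monotone (φ r))
    (hq : IsWardropEq ρ inc φ q) (hy : y ∈ flowPolytope ρ) :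
    (q - y) ⬝ᵥ routeCost inc φ y ≤ 0 := by
  have hmin : q ⬝ᵥ routeCost inc φ q ≤ y ⬝ᵥ routeCost inc φ q := (isWardropEq_iff.1 hq).2 hy
  have hmono := sub_dotProduct_routeCost_sub_nonneg (inc := inc) (y := q) (z := y) hφ
  rw [dotProduct_sub, sub_dotProduct] at hmono
  linarith

theorem IsWardropEq.edgeLoad_eq (hφ : ∀ r, StrictMono (φ r)) (hq : IsWardropEq ρ inc φ q)
    (hy : y ∈ flowPolytope ρ) (h : 0 ≤ (q - y) ⬝ᵥ routeCost inc φ y) :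
    edgeLoad inc y = edgeLoad inc q := by
  have hmin : q ⬝ᵥ routeCost inc φ q ≤ y ⬝ᵥ routeCost inc φ q := (isWardropEq_iff.1 hq).2 hy
  refine (edgeLoad_eq_of_sub_dotProduct_routeCost_sub_nonpos hφ ?_).symm
  rw [dotProduct_sub, sub_dotProduct]
  linarith

theorem IsWardropEq.edgeLoad_eq_of_isWardropEq (hφ : ∀ r, StrictMono (φ r))
    (hq : IsWardropEq ρ inc φ q) (hp : IsWardropEq ρ inc φ p) :
    edgeLoad inc p = edgeLoad inc q := by
  refine hq.edgeLoad_eq hφ hp.1 ?_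
  have hmin : p ⬝ᵥ routeCost inc φ p ≤ q ⬝ᵥ routeCost inc φ p := (isWardropEq_iff.1 hp).2 hq.1
  rw [sub_dotProduct]
  linarith

theorem IsWardropEq.of_edgeLoad_eq (hq : IsWardropEq ρ inc φ q) (hp : p ∈ flowPolytope ρ)
    (hL : edgeLoad inc p = edgeLoad inc q) : IsWardropEq ρ inc φ p := by
  have hc : routeCost inc φ p = routeCost inc φ q := funext fun a => by simp only [routeCost, hL]
  have hpq : p ⬝ᵥ routeCost inc φ q = q ⬝ᵥ routeCost inc φ q := by
    rw [← sub_eq_zero, ← sub_dotProduct, dotProduct_routeCost, map_sub, hL, sub_self,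
      zero_dotProduct]
  refine isWardropEq_iff.2 ⟨hp, fun y hy => ?_⟩
  show p ⬝ᵥ routeCost inc φ p ≤ y ⬝ᵥ routeCost inc φ p
  rw [hc, hpq]
  exact (isWardropEq_iff.1 hq).2 hy

end Network

variable [Fintype E]

section Beckmann

variable {ρ : ι → ℝ} {inc : (Σ i, A i) → Finset E} {φ F : E → ℝ → ℝ}
  {q : (Σ i, A i) → ℝ}

def beckmann (F : E → ℝ → ℝ) (inc : (Σ i, A i) → Finset E) (y : (Σ i, A i) → ℝ) : ℝ :=
  ∑ r, F r (edgeLoad inc y r)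

theorem hasFDerivAt_beckmann (hF : ∀ r w, HasDerivAt (F r) (φ r w) w) (q : (Σ i, A i) → ℝ) :
    HasFDerivAt (beckmann F inc)
      (∑ r, φ r (edgeLoad inc q r) •
        (ContinuousLinearMap.proj r ∘L (edgeLoad inc).toContinuousLinearMap)) q :=
  HasFDerivAt.fun_sum fun r _ =>
    (hF r _).comp_hasFDerivAt q
      (ContinuousLinearMap.proj r ∘L (edgeLoad inc).toContinuousLinearMap).hasFDerivAt

theorem isMinOn_dotProduct_routeCost_of_isMinOn_beckmann
    (hF : ∀ r w, HasDerivAt (F r) (φ r w) w) (hq : q ∈ flowPolytope ρ)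
    (hmin : IsMinOn (beckmann F inc) (flowPolytope ρ) q) :
    IsMinOn (· ⬝ᵥ routeCost inc φ q) (flowPolytope ρ) q := by
  intro y hy
  have h := hmin.localize.hasFDerivWithinAt_nonneg (hasFDerivAt_beckmann hF q).hasFDerivWithinAt
    (sub_mem_posTangentConeAt_of_segment_subset (convex_flowPolytope.segment_subset hq hy))
  have hval : (∑ r, φ r (edgeLoad inc q r) •
      (ContinuousLinearMap.proj r ∘L (edgeLoad inc).toContinuousLinearMap)) (y - q) =
        (y - q) ⬝ᵥ routeCost inc φ q := by
    rw [dotProduct_routeCost, dotProduct]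
    simp [mul_comm]
  rw [hval, sub_dotProduct, sub_nonneg] at h
  exact h

theorem exists_isWardropEq (hφ : ∀ r, Continuous (φ r))
    (hne : (flowPolytope (A := A) ρ).Nonempty) :
    ∃ q, IsWardropEq ρ inc φ q := by
  have hF : ∀ r w, HasDerivAt (fun w => ∫ s in (0 : ℝ)..w, φ r s) (φ r w) w := fun r w =>
    ((hφ r).integral_hasStrictDerivAt 0 w).hasDerivAt
  obtain ⟨q, hq, hmin⟩ := (isCompact_flowPolytope ρ).exists_isMinOn hne
    (continuous_iff_continuousAt.2 fun y => (hasFDerivAt_beckmann hF y).continuousAt).continuousOn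
  exact ⟨q, isWardropEq_iff.2 ⟨hq, isMinOn_dotProduct_routeCost_of_isMinOn_beckmann hF hq hmin⟩⟩

end Beckmann

section Entropy

variable {ρ lam : ι → ℝ} {p y : (Σ i, A i) → ℝ}

noncomputable def relEntropy (lam : ι → ℝ) (p y : (Σ i, A i) → ℝ) : ℝ :=
  ∑ a, (lam a.1)⁻¹ * (p a * (Real.log (p a) - Real.log (y a)))

theorem relEntropy_self (lam : ι → ℝ) (p : (Σ i, A i) → ℝ) : relEntropy lam p p = 0 := by
  simp [relEntropy]

theorem continuousAt_relEntropy (lam : ι → ℝ) (p : (Σ i, A i) → ℝ) :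
    ContinuousAt (relEntropy lam p) p := by
  refine tendsto_finsetSum _ fun a _ => ?_
  rcases eq_or_ne (p a) 0 with h | h
  · simp only [h, zero_mul, mul_zero]; exact tendsto_const_nhds
  · exact ((((continuousAt_apply a p).log h).const_sub _).const_mul _).const_mul _

theorem sum_sq_sqrt_sub_le_relEntropy (hlam : ∀ i, 0 < lam i) (hp : p ∈ flowPolytope ρ)
    (hy : ∀ a, 0 < y a) (hysum : ∀ i, ∑ α : A i, y ⟨i, α⟩ = ρ i) :
    ∑ a, (lam a.1)⁻¹ * (√(p a) - √(y a)) ^ 2 ≤ relEntropy lam p y := by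
  have hmass : ∑ a : Σ i, A i, (lam a.1)⁻¹ * (p a - y a) = 0 := by
    simp only [Fintype.sum_sigma, ← Finset.mul_sum, Finset.sum_sub_distrib, hp.2, hysum, sub_self,
      mul_zero, Finset.sum_const_zero]
  calc ∑ a, (lam a.1)⁻¹ * (√(p a) - √(y a)) ^ 2
      ≤ ∑ a, (lam a.1)⁻¹ * (p a * (Real.log (p a) - Real.log (y a)) - (p a - y a)) :=
        Finset.sum_le_sum fun a _ => mul_le_mul_of_nonneg_left
          (Real.sq_sqrt_sub_sqrt_le (hp.1 a) (hy a)) (inv_nonneg.2 (hlam a.1).le)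
    _ = relEntropy lam p y - ∑ a, (lam a.1)⁻¹ * (p a - y a) := by
        simp only [relEntropy, ← Finset.sum_sub_distrib, mul_sub]
    _ = relEntropy lam p y := by rw [hmass, sub_zero]

theorem relEntropy_nonneg (hlam : ∀ i, 0 < lam i) (hp : p ∈ flowPolytope ρ)
    (hy : ∀ a, 0 < y a) (hysum : ∀ i, ∑ α : A i, y ⟨i, α⟩ = ρ i) : 0 ≤ relEntropy lam p y :=
  (Finset.sum_nonneg fun a _ => mul_nonneg (inv_nonneg.2 (hlam a.1).le) (sq_nonneg _)).trans
    (sum_sq_sqrt_sub_le_relEntropy hlam hp hy hysum)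

theorem tendsto_of_tendsto_relEntropy {β : Type*} {l : Filter β} {f : β → (Σ i, A i) → ℝ}
    (hlam : ∀ i, 0 < lam i) (hp : p ∈ flowPolytope ρ)
    (hf : ∀ᶠ b in l, (∀ a, 0 < f b a) ∧ ∀ i, ∑ α : A i, f b ⟨i, α⟩ = ρ i)
    (h : Tendsto (fun b => relEntropy lam p (f b)) l (𝓝 0)) : Tendsto f l (𝓝 p) := by
  refine tendsto_pi_nhds.2 fun a => ?_
  have hsq : Tendsto (fun b => (√(p a) - √(f b a)) ^ 2) l (𝓝 0) := by
    refine squeeze_zero' (.of_forall fun b => sq_nonneg _) ?_ (by simpa using h.const_mul (lam a.1))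
    filter_upwards [hf] with b ⟨hpos, hsum⟩
    rw [← inv_mul_le_iff₀ (hlam a.1)]
    exact (Finset.single_le_sum (fun a _ => mul_nonneg (inv_nonneg.2 (hlam a.1).le) (sq_nonneg _))
      (Finset.mem_univ a)).trans (sum_sq_sqrt_sub_le_relEntropy hlam hp hpos hsum)
  have hsqrt : Tendsto (fun b => √(f b a)) l (𝓝 √(p a)) := by
    have := (Real.continuous_sqrt.tendsto 0).comp hsq
    simp only [Function.comp_def, Real.sqrt_sq_eq_abs, Real.sqrt_zero] at this
    simpa using (tendsto_const_nhds (x := √(p a))).sub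
      ((tendsto_zero_iff_abs_tendsto_zero _).2 this)
  have := hsqrt.pow 2
  rw [Real.sq_sqrt (hp.1 a)] at this
  refine this.congr' ?_
  filter_upwards [hf] with b hb using Real.sq_sqrt (hb.1 a).le

theorem hasDerivAt_relEntropy_replicator {x : ℝ → (Σ i, A i) → ℝ} {c : (Σ i, A i) → ℝ} {t : ℝ}
    (hρ : ∀ i, ρ i ≠ 0) (hlam : ∀ i, lam i ≠ 0) (hp : ∀ i, ∑ α : A i, p ⟨i, α⟩ = ρ i)
    (hx : ∀ a, 0 < x t a)
    (hode : ∀ a, HasDerivAt (fun s => x s a)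
      (lam a.1 * x t a * ((ρ a.1)⁻¹ * ∑ α : A a.1, x t ⟨a.1, α⟩ * c ⟨a.1, α⟩ - c a)) t) :
    HasDerivAt (fun s => relEntropy lam p (x s)) ((p - x t) ⬝ᵥ c) t := by
  refine (HasDerivAt.fun_sum fun a _ =>
    ((((hode a).log (hx a).ne').const_sub (Real.log (p a))).const_mul (p a)).const_mul
      (lam a.1)⁻¹).congr_deriv ?_
  have hterm : ∀ a : Σ i, A i,
      (lam a.1)⁻¹ * (p a * -(lam a.1 * x t a *
        ((ρ a.1)⁻¹ * ∑ α : A a.1, x t ⟨a.1, α⟩ * c ⟨a.1, α⟩ - c a) / x t a)) =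
      p a * c a - (ρ a.1)⁻¹ * p a * ∑ α : A a.1, x t ⟨a.1, α⟩ * c ⟨a.1, α⟩ := fun a => by
    field_simp [hlam a.1, (hx a).ne']
    ring
  rw [Finset.sum_congr rfl fun a _ => hterm a, sub_dotProduct, Finset.sum_sub_distrib]
  congr 1
  simp only [dotProduct, Fintype.sum_sigma]
  refine Finset.sum_congr rfl fun i _ => ?_
  rw [← Finset.sum_mul _ _ (∑ α : A i, x t ⟨i, α⟩ * c ⟨i, α⟩), ← Finset.mul_sum, hp,
    inv_mul_cancel₀ (hρ i), one_mul]

end Entropy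

section Dynamics

variable {ρ lam : ι → ℝ} {inc : (Σ i, A i) → Finset E}
  {φ : E → ℝ → ℝ}

theorem exists_isWardropEq_tendsto_of_replicator (hρ : ∀ i, 0 < ρ i) (hlam : ∀ i, 0 < lam i)
    (hφc : ∀ r, Continuous (φ r)) (hφ : ∀ r, StrictMono (φ r)) {x : ℝ → (Σ i, A i) → ℝ}
    (hode : ∀ a t, 0 ≤ t → HasDerivAt (fun s => x s a)
      (lam a.1 * x t a * ((ρ a.1)⁻¹ * ∑ α : A a.1, x t ⟨a.1, α⟩ * routeCost inc φ (x t) ⟨a.1, α⟩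
        - routeCost inc φ (x t) a)) t)
    (hint : ∀ t, 0 ≤ t → (∀ a, 0 < x t a) ∧ ∀ i, ∑ α : A i, x t ⟨i, α⟩ = ρ i) :
    ∃ q, IsWardropEq ρ inc φ q ∧ Tendsto x atTop (𝓝 q) := by
  have hxΔ : ∀ t, 0 ≤ t → x t ∈ flowPolytope ρ := fun t ht =>
    ⟨fun a => ((hint t ht).1 a).le, (hint t ht).2⟩
  have hH : ∀ p ∈ flowPolytope ρ, ∀ t, 0 ≤ t → HasDerivAt (fun s => relEntropy lam p (x s))
      ((p - x t) ⬝ᵥ routeCost inc φ (x t)) t := fun p hp t ht =>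
    hasDerivAt_relEntropy_replicator (fun i => (hρ i).ne') (fun i => (hlam i).ne') hp.2
      (hint t ht).1 fun a => hode a t ht
  have hH' : ∀ p, IsWardropEq ρ inc φ p → ∀ t, 0 ≤ t →
      (p - x t) ⬝ᵥ routeCost inc φ (x t) ≤ 0 := fun p hp t ht =>
    hp.sub_dotProduct_routeCost_nonpos (fun r => (hφ r).monotone) (hxΔ t ht)
  have hH0 : ∀ p ∈ flowPolytope ρ, ∀ t, 0 ≤ t → 0 ≤ relEntropy lam p (x t) := fun p hp t ht =>
    relEntropy_nonneg hlam hp (hint t ht).1 (hint t ht).2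
  obtain ⟨q, hq⟩ := exists_isWardropEq (inc := inc) hφc ⟨x 0, hxΔ 0 le_rfl⟩
  obtain ⟨s, hsn, hs⟩ := exists_seq_tendsto_deriv_zero (hH q hq.1) (hH' q hq) (hH0 q hq.1)
  have hs0 : ∀ n, 0 ≤ s n := fun n => n.cast_nonneg.trans (hsn n)
  obtain ⟨p, hp, ψ, hψ, hxp⟩ :=
    (isCompact_flowPolytope ρ).tendsto_subseq fun n => hxΔ (s n) (hs0 n)
  have hgap : (q - p) ⬝ᵥ routeCost inc φ p = 0 := tendsto_nhds_unique
    ((((continuous_const.sub continuous_id).dotProduct (continuous_routeCost hφc)).tendsto p).comp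
      hxp) (hs.comp hψ.tendsto_atTop)
  have hpW : IsWardropEq ρ inc φ p := hq.of_edgeLoad_eq hp (hq.edgeLoad_eq hφ hp hgap.ge)
  have hanti : AntitoneOn (fun t => relEntropy lam p (x t)) (Set.Ici 0) :=
    antitoneOn_of_hasDerivWithinAt_nonpos (convex_Ici 0)
      (fun t ht => (hH p hp t ht).continuousAt.continuousWithinAt)
      (fun t ht => (hH p hp t (interior_subset ht)).hasDerivWithinAt)
      (fun t ht => hH' p hpW t (interior_subset ht))
  have hHp : Tendsto (fun t => relEntropy lam p (x t)) atTop (𝓝 0) :=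
    tendsto_of_antitoneOn_of_tendsto_comp hanti (fun k => hs0 (ψ k))
      ((tendsto_atTop_mono hsn tendsto_natCast_atTop_atTop).comp hψ.tendsto_atTop)
      (relEntropy_self lam p ▸ (continuousAt_relEntropy lam p).tendsto.comp hxp)
  exact ⟨p, hpW, tendsto_of_tendsto_relEntropy hlam hp ((eventually_ge_atTop 0).mono hint) hHp⟩

end Dynamics

end CongestionGame

open CongestionGame in
/-- Every interior solution of the rate-adjusted replicator dynamics
in a congestion model with strictly increasing C¹ latencies converges, as
`t → ∞`, to a single Wardrop equilibrium; if the network is irreducible this is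
the unique Wardrop equilibrium. -/
theorem stmt13 {ι : Type*} [Fintype ι] {A : ι → Type*} [∀ i, Fintype (A i)]
    {E : Type*} [Fintype E] [DecidableEq E]
    (ρ lam : ι → ℝ) (hρ : ∀ i, 0 < ρ i) (hlam : ∀ i, 0 < lam i)
    (inc : (Σ i, A i) → Finset E)
    (φ φ' : E → ℝ → ℝ)
    (hφ : ∀ r w, HasDerivAt (φ r) (φ' r w) w) (hφ' : ∀ r w, 0 < φ' r w)
    (load : ((Σ i, A i) → ℝ) → E → ℝ)
    (hload : ∀ x r, load x r = ∑ a : Σ i, A i, (if r ∈ inc a then x a else 0))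
    (ω : (Σ i, A i) → ((Σ i, A i) → ℝ) → ℝ)
    (hω : ∀ a x, ω a x = ∑ r ∈ inc a, φ r (load x r))
    (wbar : ι → ((Σ i, A i) → ℝ) → ℝ)
    (hwbar : ∀ i x, wbar i x = (ρ i)⁻¹ * ∑ α : A i, x ⟨i, α⟩ * ω ⟨i, α⟩ x)
    (Δset : Set ((Σ i, A i) → ℝ))
    (hΔ : Δset = {x | (∀ a, 0 ≤ x a) ∧ ∀ i, ∑ α : A i, x ⟨i, α⟩ = ρ i})
    (IsWardrop : ((Σ i, A i) → ℝ) → Prop)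
    (hWdef : ∀ x, IsWardrop x ↔ x ∈ Δset ∧
      ∀ i, ∀ α β : A i, 0 < x ⟨i, α⟩ → ω ⟨i, α⟩ x ≤ ω ⟨i, β⟩ x)
    (x : ℝ → (Σ i, A i) → ℝ)
    (hode : ∀ (a : Σ i, A i) (t : ℝ), 0 ≤ t →
      HasDerivAt (fun s => x s a) (lam a.1 * x t a * (wbar a.1 (x t) - ω a (x t))) t)
    (hint : ∀ t, 0 ≤ t → ((∀ a, 0 < x t a) ∧ ∀ i, ∑ α : A i, x t ⟨i, α⟩ = ρ i)) :
    ∃ q, IsWardrop q ∧ Filter.Tendsto x Filter.atTop (nhds q) ∧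
      ((∀ z : (Σ i, A i) → ℝ, (∀ i, ∑ α : A i, z ⟨i, α⟩ = 0) →
          (∀ r, ∑ a : Σ i, A i, (if r ∈ inc a then z a else 0) = 0) → z = 0) →
        ∀ q', IsWardrop q' → q' = q) := by
  obtain rfl : wbar = fun i y => (ρ i)⁻¹ * ∑ α : A i, y ⟨i, α⟩ * ω ⟨i, α⟩ y := funext₂ hwbar
  obtain rfl : IsWardrop = fun y => y ∈ Δset ∧
      ∀ i, ∀ α β : A i, 0 < y ⟨i, α⟩ → ω ⟨i, α⟩ y ≤ ω ⟨i, β⟩ y := funext fun y => propext (hWdef y)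
  obtain rfl : ω = fun a y => ∑ r ∈ inc a, φ r (load y r) := funext₂ hω
  obtain rfl : load = edgeLoad inc := funext₂ hload
  subst hΔ
  have hφmono : ∀ r, StrictMono (φ r) := fun r => strictMono_of_hasDerivAt_pos (hφ r) (hφ' r)
  obtain ⟨q, hq, hlim⟩ := exists_isWardropEq_tendsto_of_replicator hρ hlam
    (fun r => continuous_iff_continuousAt.2 fun w => (hφ r w).continuousAt) hφmono hode hint
  refine ⟨q, hq, hlim, fun hinj q' hq' => sub_eq_zero.1 (hinj (q' - q) (fun i => ?_) fun r => ?_)⟩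
  · simp [Finset.sum_sub_distrib, hq'.1.2 i, hq.1.2 i]
  · change edgeLoad inc (q' - q) r = 0
    rw [map_sub, hq.edgeLoad_eq_of_isWardropEq hφmono hq', sub_self, Pi.zero_apply]
end

section
/- Strict-equilibrium lower bound for the adjoint potential: if q = Σᵢ ρᵢ e_{i,0} is a strict Wardrop equilibrium and z ∈ T_qΔ is such that q + tz ∈ Δ for t ∈ [0,1], then L_q(q + tz) ≥ (t/2) Σᵢ Δωᵢ ‖zᵢ‖₁ for all such t, where Δωᵢ = min_{μ≠0} {ω_{iμ}(q) − ω_{i,0}(q)} > 0 and ‖zᵢ‖₁ = Σ_α |z_{iα}|. -/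
/-- Strict-equilibrium lower bound for the adjoint potential:
if `q = Σᵢ ρᵢ e_{i,0}` is a strict Wardrop equilibrium and `z ∈ T_qΔ`, then
`L_q(q + tz) ≥ (t/2) Σᵢ Δωᵢ ‖zᵢ‖₁` for all `t ∈ [0,1]` with `q + tz ∈ Δ`,
where `Δωᵢ` is (bounded above by) the minimal latency gap
`min_{μ≠0} {ω_{iμ}(q) − ω_{i,0}(q)} > 0`. -/
theorem stmt14 {ι : Type*} [Fintype ι] {A : ι → Type*} [∀ i, Fintype (A i)]
    [∀ i, DecidableEq (A i)]
    {E : Type*} [Fintype E] [DecidableEq E]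
    (ρ : ι → ℝ) (hρ : ∀ i, 0 < ρ i)
    (inc : (Σ i, A i) → Finset E)
    (φ : E → ℝ → ℝ) (hmono : ∀ r, Monotone (φ r)) (hcont : ∀ r, Continuous (φ r))
    (load : ((Σ i, A i) → ℝ) → E → ℝ)
    (hload : ∀ x r, load x r = ∑ a : Σ i, A i, (if r ∈ inc a then x a else 0))
    (ω : (Σ i, A i) → ((Σ i, A i) → ℝ) → ℝ)
    (hω : ∀ a x, ω a x = ∑ r ∈ inc a, φ r (load x r))
    (Δset : Set ((Σ i, A i) → ℝ))
    (hΔ : Δset = {x | (∀ a, 0 ≤ x a) ∧ ∀ i, ∑ α : A i, x ⟨i, α⟩ = ρ i})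
    (a0 : ∀ i, A i)
    (q : (Σ i, A i) → ℝ)
    (hpure : ∀ i (α : A i), q ⟨i, α⟩ = if α = a0 i then ρ i else 0)
    (hstrict : ∀ i (μ : A i), μ ≠ a0 i → ω ⟨i, a0 i⟩ q < ω ⟨i, μ⟩ q)
    (L : ((Σ i, A i) → ℝ) → ℝ)
    (hL : ∀ x, L x = ∑ a : Σ i, A i, (x a - q a) * ω a x)
    (z : (Σ i, A i) → ℝ)
    (hz : ∀ i, ∑ α : A i, z ⟨i, α⟩ = 0)
    (Δω : ι → ℝ) (hΔω0 : ∀ i, 0 ≤ Δω i)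
    (hΔω : ∀ i (μ : A i), μ ≠ a0 i → Δω i ≤ ω ⟨i, μ⟩ q - ω ⟨i, a0 i⟩ q) :
    ∀ t ∈ Set.Icc (0:ℝ) 1, q + t • z ∈ Δset →
      (t / 2) * ∑ i, Δω i * (∑ α : A i, |z ⟨i, α⟩|) ≤ L (q + t • z) := by

  intro t ht hmem
  rcases eq_or_lt_of_le ht.1 with h0 | h0
  · -- t = 0 case
    rw [← h0]
    simp [hL]
  rw [hΔ] at hmem
  obtain ⟨hx0, -⟩ := hmem
  have hznn : ∀ i (μ : A i), μ ≠ a0 i → 0 ≤ z ⟨i, μ⟩ := by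
    intro i μ hμ
    have h := hx0 ⟨i, μ⟩
    simp only [Pi.add_apply, Pi.smul_apply, smul_eq_mul, hpure i μ, if_neg hμ,
      zero_add] at h
    by_contra hc
    push_neg at hc
    nlinarith [mul_pos h0 (neg_pos.mpr hc)]
  set D : E → ℝ := fun r => ∑ a : Σ i, A i, (if r ∈ inc a then z a else 0) with hD
  have hloadx : ∀ r, load (q + t • z) r = load q r + t * D r := by
    intro r
    rw [hload, hload, hD, Finset.mul_sum, ← Finset.sum_add_distrib]
    apply Finset.sum_congr rfl
    intro a _
    simp only [Pi.add_apply, Pi.smul_apply, smul_eq_mul]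
    split_ifs <;> ring
  have swap : ∀ x : (Σ i, A i) → ℝ,
      ∑ a : Σ i, A i, t * z a * ω a x = ∑ r, t * D r * φ r (load x r) := by
    intro x
    have step : ∀ a : Σ i, A i, t * z a * ω a x
        = ∑ r, (if r ∈ inc a then t * z a * φ r (load x r) else 0) := by
      intro a
      rw [hω, Finset.mul_sum, Finset.sum_ite_mem, Finset.univ_inter]
    simp only [step]
    rw [Finset.sum_comm]
    apply Finset.sum_congr rfl
    intro r _
    rw [hD]
    simp only [Finset.sum_mul, Finset.mul_sum, ite_mul, mul_ite, zero_mul, mul_zero]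
  have hpt : ∀ r, t * D r * φ r (load q r) ≤ t * D r * φ r (load (q + t • z) r) := by
    intro r
    rcases le_or_gt 0 (D r) with h | h
    · have h1 : load q r ≤ load (q + t • z) r := by
        rw [hloadx]; nlinarith
      have h2 := hmono r h1
      exact mul_le_mul_of_nonneg_left h2 (mul_nonneg h0.le h)
    · have h1 : load (q + t • z) r ≤ load q r := by
        rw [hloadx]; nlinarith
      have h2 := hmono r h1
      exact mul_le_mul_of_nonpos_left h2 (mul_nonpos_of_nonneg_of_nonpos h0.le h.le)
  have hi : ∀ i, Δω i * (∑ α : A i, |z ⟨i, α⟩|) / 2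
      ≤ ∑ α : A i, z ⟨i, α⟩ * ω ⟨i, α⟩ q := by
    intro i
    have hmem0 : a0 i ∈ (Finset.univ : Finset (A i)) := Finset.mem_univ _
    have hz0 : z ⟨i, a0 i⟩ = -∑ α ∈ Finset.univ.erase (a0 i), z ⟨i, α⟩ := by
      have h := hz i
      rw [← Finset.add_sum_erase _ _ hmem0] at h
      linarith
    have hSnn : 0 ≤ ∑ α ∈ Finset.univ.erase (a0 i), z ⟨i, α⟩ :=
      Finset.sum_nonneg fun μ hμ => hznn i μ (Finset.ne_of_mem_erase hμ)
    have habs : ∑ α : A i, |z ⟨i, α⟩| = 2 * ∑ α ∈ Finset.univ.erase (a0 i), z ⟨i, α⟩ := by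
      rw [← Finset.add_sum_erase _ _ hmem0, hz0, abs_neg, abs_of_nonneg hSnn]
      have : ∑ α ∈ Finset.univ.erase (a0 i), |z ⟨i, α⟩|
          = ∑ α ∈ Finset.univ.erase (a0 i), z ⟨i, α⟩ :=
        Finset.sum_congr rfl fun μ hμ => abs_of_nonneg (hznn i μ (Finset.ne_of_mem_erase hμ))
      rw [this]; ring
    have h1 : ∑ μ ∈ Finset.univ.erase (a0 i), z ⟨i, μ⟩ * (Δω i + ω ⟨i, a0 i⟩ q)
        ≤ ∑ μ ∈ Finset.univ.erase (a0 i), z ⟨i, μ⟩ * ω ⟨i, μ⟩ q := by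
      apply Finset.sum_le_sum
      intro μ hμ
      have hgap := hΔω i μ (Finset.ne_of_mem_erase hμ)
      have hznn' := hznn i μ (Finset.ne_of_mem_erase hμ)
      nlinarith
    rw [← Finset.sum_mul] at h1
    rw [habs, ← Finset.add_sum_erase _ (fun α => z ⟨i, α⟩ * ω ⟨i, α⟩ q) hmem0, hz0]
    nlinarith
  have hsum_i : ∑ i, Δω i * (∑ α : A i, |z ⟨i, α⟩|) / 2
      ≤ ∑ i, ∑ α : A i, z ⟨i, α⟩ * ω ⟨i, α⟩ q :=
    Finset.sum_le_sum fun i _ => hi i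
  have hsigma : ∑ i, ∑ α : A i, z ⟨i, α⟩ * ω ⟨i, α⟩ q
      = ∑ a : Σ i, A i, z a * ω a q := by
    rw [← Finset.univ_sigma_univ, Finset.sum_sigma]
  calc (t / 2) * ∑ i, Δω i * (∑ α : A i, |z ⟨i, α⟩|)
      = t * ∑ i, Δω i * (∑ α : A i, |z ⟨i, α⟩|) / 2 := by
        rw [← Finset.sum_div]; ring
    _ ≤ t * ∑ a : Σ i, A i, z a * ω a q := by
        rw [← hsigma]
        exact mul_le_mul_of_nonneg_left hsum_i (le_of_lt h0)
    _ = ∑ a : Σ i, A i, t * z a * ω a q := by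
        rw [Finset.mul_sum]; exact Finset.sum_congr rfl fun a _ => by ring
    _ = ∑ r, t * D r * φ r (load q r) := swap q
    _ ≤ ∑ r, t * D r * φ r (load (q + t • z) r) := Finset.sum_le_sum fun r _ => hpt r
    _ = ∑ a : Σ i, A i, t * z a * ω a (q + t • z) := (swap _).symm
    _ = L (q + t • z) := by
        rw [hL]
        apply Finset.sum_congr rfl
        intro a _
        simp only [Pi.add_apply, Pi.smul_apply, smul_eq_mul]
        ring
end

section
/- Interior-equilibrium lower bound for the adjoint potential: if q is an interior Wardrop equilibrium and z ∈ T_qΔ with q + tz ∈ Δ, then L_q(q + tz) ≥ (m/2)‖P(z)‖² t², where m = inf{φ_r'(y_r) : r ∈ E, y ∈ P(Δ)} > 0 and ‖·‖ is the Euclidean norm. -/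
/-- Interior-equilibrium lower bound for the adjoint potential:
if `q` is an interior Wardrop equilibrium and `z ∈ T_qΔ`, then
`L_q(q + tz) ≥ (m/2) ‖P(z)‖² t²` whenever `q + tz ∈ Δ`, `t ≥ 0`, where
`m = inf {φ_r'(y_r)} > 0` over the compact set of admissible loads. -/
theorem stmt15 {ι : Type*} [Fintype ι] {A : ι → Type*} [∀ i, Fintype (A i)]
    {E : Type*} [Fintype E] [DecidableEq E]
    (ρ : ι → ℝ) (hρ : ∀ i, 0 < ρ i)
    (inc : (Σ i, A i) → Finset E)
    (φ φ' : E → ℝ → ℝ)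
    (hφ : ∀ r w, HasDerivAt (φ r) (φ' r w) w)
    (load : ((Σ i, A i) → ℝ) → E → ℝ)
    (hload : ∀ x r, load x r = ∑ a : Σ i, A i, (if r ∈ inc a then x a else 0))
    (ω : (Σ i, A i) → ((Σ i, A i) → ℝ) → ℝ)
    (hω : ∀ a x, ω a x = ∑ r ∈ inc a, φ r (load x r))
    (Δset : Set ((Σ i, A i) → ℝ))
    (hΔ : Δset = {x | (∀ a, 0 ≤ x a) ∧ ∀ i, ∑ α : A i, x ⟨i, α⟩ = ρ i})
    (q : (Σ i, A i) → ℝ)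
    (hqΔ : q ∈ Δset) (hqint : ∀ a, 0 < q a)
    (hqW : ∀ i, ∀ α β : A i, 0 < q ⟨i, α⟩ → ω ⟨i, α⟩ q ≤ ω ⟨i, β⟩ q)
    (m : ℝ) (hm0 : 0 < m)
    (hm : ∀ r, ∀ x ∈ Δset, m ≤ φ' r (load x r))
    (L : ((Σ i, A i) → ℝ) → ℝ)
    (hL : ∀ x, L x = ∑ a : Σ i, A i, (x a - q a) * ω a x)
    (z : (Σ i, A i) → ℝ)
    (hz : ∀ i, ∑ α : A i, z ⟨i, α⟩ = 0) :
    ∀ t : ℝ, 0 ≤ t → q + t • z ∈ Δset →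
      (m / 2) * (∑ r, (load z r) ^ 2) * t ^ 2 ≤ L (q + t • z) := by

  intro t ht hqt
  -- linearity of load
  have hlin : ∀ (s : ℝ) (r : E), load (q + s • z) r = load q r + s * load z r := by
    intro s r
    simp only [hload, Finset.mul_sum, ← Finset.sum_add_distrib]
    refine Finset.sum_congr rfl fun a _ => ?_
    by_cases h : r ∈ inc a <;> simp [h] <;> ring
  have hΔq := hqΔ
  rw [hΔ] at hΔq hqt
  -- membership along the segment
  have hseg : ∀ s : ℝ, 0 ≤ s → s ≤ t → q + s • z ∈ Δset := by
    intro s hs0 hst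
    rw [hΔ]
    refine ⟨fun a => ?_, fun i => ?_⟩
    · have h1 := hΔq.1 a
      have h2 := hqt.1 a
      simp only [Pi.add_apply, Pi.smul_apply, smul_eq_mul] at h2 ⊢
      rcases le_or_gt 0 (z a) with hz' | hz'
      · nlinarith
      · nlinarith
    · simp only [Pi.add_apply, Pi.smul_apply, smul_eq_mul]
      rw [Finset.sum_add_distrib, ← Finset.mul_sum, hz i, hΔq.2 i]
      ring
  -- swap sums
  have hswap : ∀ x, ∑ a, z a * ω a x = ∑ r, load z r * φ r (load x r) := by
    intro x
    have key : ∀ a : Σ i, A i, z a * ω a x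
        = ∑ r, (if r ∈ inc a then z a else 0) * φ r (load x r) := by
      intro a
      rw [hω, Finset.mul_sum]
      rw [show (∑ r, (if r ∈ inc a then z a else 0) * φ r (load x r))
          = ∑ r, (if r ∈ inc a then z a * φ r (load x r) else 0) from
        Finset.sum_congr rfl fun r _ => by by_cases h : r ∈ inc a <;> simp [h]]
      rw [Finset.sum_ite_mem, Finset.univ_inter]
    simp only [key]
    rw [Finset.sum_comm]
    refine Finset.sum_congr rfl fun r _ => ?_
    rw [← Finset.sum_mul, hload z r]
  -- equilibrium gives zero first-order term
  have heq0 : ∑ a, z a * ω a q = 0 := by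
    rw [← Finset.univ_sigma_univ, Finset.sum_sigma]
    refine Finset.sum_eq_zero fun i _ => ?_
    rcases isEmpty_or_nonempty (A i) with h | h
    · simp
    · obtain ⟨α₀⟩ := h
      have hc : ∀ α : A i, ω ⟨i, α⟩ q = ω ⟨i, α₀⟩ q := fun α =>
        le_antisymm (hqW i α α₀ (hqint _)) (hqW i α₀ α (hqint _))
      calc ∑ α, z ⟨i, α⟩ * ω ⟨i, α⟩ q
          = ∑ α, z ⟨i, α⟩ * ω ⟨i, α₀⟩ q :=
            Finset.sum_congr rfl fun α _ => by rw [hc α]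
        _ = (∑ α, z ⟨i, α⟩) * ω ⟨i, α₀⟩ q := by rw [Finset.sum_mul]
        _ = 0 := by rw [hz i]; ring
  -- value of L
  have hLval : L (q + t • z)
      = t * ∑ r, load z r * (φ r (load q r + t * load z r) - φ r (load q r)) := by
    rw [hL]
    have h1 : ∀ a : Σ i, A i, ((q + t • z) a - q a) * ω a (q + t • z)
        = t * (z a * ω a (q + t • z)) := by
      intro a
      simp only [Pi.add_apply, Pi.smul_apply, smul_eq_mul]
      ring
    rw [Finset.sum_congr rfl fun a _ => h1 a, ← Finset.mul_sum, hswap]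
    have h2 : (0:ℝ) = t * ∑ r, load z r * φ r (load q r) := by
      rw [← hswap, heq0, mul_zero]
    calc t * ∑ r, load z r * φ r (load (q + t • z) r)
        = t * ∑ r, load z r * φ r (load q r + t * load z r) := by
          refine congrArg _ (Finset.sum_congr rfl fun r _ => ?_)
          rw [hlin]
      _ = t * ∑ r, load z r * φ r (load q r + t * load z r)
            - t * ∑ r, load z r * φ r (load q r) := by rw [← h2]; ring
      _ = t * ∑ r, load z r * (φ r (load q r + t * load z r) - φ r (load q r)) := by
          rw [Finset.mul_sum, Finset.mul_sum, Finset.mul_sum, ← Finset.sum_sub_distrib]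
          exact Finset.sum_congr rfl fun r _ => by ring
  rw [hLval, Finset.mul_sum, Finset.mul_sum]
  rw [Finset.sum_mul]
  refine Finset.sum_le_sum fun r _ => ?_
  -- per-edge inequality via MVT
  set c := t * load z r with hc
  have hderiv : ∀ θ : ℝ, HasDerivAt (fun θ => φ r (load q r + θ * c))
      (φ' r (load q r + θ * c) * c) θ := by
    intro θ
    have h1 : HasDerivAt (fun θ : ℝ => load q r + θ * c) c θ := by
      simpa using ((hasDerivAt_id θ).mul_const c).const_add (load q r)
    exact (hφ r _).comp θ h1
  obtain ⟨θ, hθ, hslope⟩ := exists_hasDerivAt_eq_slope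
    (fun θ => φ r (load q r + θ * c)) (fun θ => φ' r (load q r + θ * c) * c) one_pos
    (fun x _ => (hderiv x).continuousAt.continuousWithinAt) (fun x hx => hderiv x)
  simp only [one_mul, zero_mul, add_zero, sub_zero, div_one] at hslope
  -- φ'(ξ) ≥ m at ξ = load q r + θ * c
  have hmem : q + (θ * t) • z ∈ Δset := by
    refine hseg (θ * t) (mul_nonneg hθ.1.le ht) ?_
    nlinarith [hθ.1, hθ.2]
  have hmle : m ≤ φ' r (load q r + θ * c) := by
    have := hm r _ hmem
    rw [hlin] at this
    convert this using 2
    rw [hc]; ring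
  -- conclude
  have hkey : φ r (load q r + c) - φ r (load q r) = φ' r (load q r + θ * c) * c := by
    rw [hslope]
  have h2 : t * (load z r * (φ r (load q r + t * load z r) - φ r (load q r)))
      = φ' r (load q r + θ * c) * c ^ 2 := by
    rw [← hc, hkey]; ring
  rw [h2]
  have hcc : c ^ 2 = t ^ 2 * load z r ^ 2 := by rw [hc]; ring
  nlinarith [mul_le_mul_of_nonneg_right hmle (sq_nonneg c), hcc, sq_nonneg c, hm0]
end
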